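/- arXiv:2204.00722 — 7 statements merged into one kernel-verified Lean document; each statement's English description precedes it below -/
import Mathlib

section
/- There is a function f : ℕ → ℕ such that for every integer k ≥ 1, every finite graph G, every linear order ≺ on V(G), and all sets X, Y, Z ⊆ V(G) with X disjoint from Y ∪ Z, the following holds: if the grid ranks of Adj_≺(G⟨X,Y⟩) and of Adj_≺(G⟨X,Z⟩) are both less than k, then the grid rank of Adj_≺(G⟨X, Y ∪ Z⟩) is less than f(k). -/
/-- A `k`-division of a matrix whose rows are indexed by the linearly ordered type `I`
and whose columns are indexed by the linearly ordered type `J`: a partition of the rows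
(resp. columns) into `k` consecutive intervals, encoded by a monotone surjection onto `Fin k`. -/
structure Division (I J : Type*) [LinearOrder I] [LinearOrder J] (k : ℕ) where
  rowPart : I → Fin k
  colPart : J → Fin k
  rowMono : Monotone rowPart
  colMono : Monotone colPart
  rowSurj : Function.Surjective rowPart
  colSurj : Function.Surjective colPart

/-- The cell `(a, b)` of the division contains at least `q` pairwise distinct rows. -/
def Division.CellHasDistinctRows {I J : Type*} [LinearOrder I] [LinearOrder J] {k : ℕ}
    {α : Type*} (D : Division I J k) (M : I → J → α) (a b : Fin k) (q : ℕ) : Prop :=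
  ∃ S : Finset I, q ≤ S.card ∧ (∀ i ∈ S, D.rowPart i = a) ∧
    ∀ i ∈ S, ∀ i' ∈ S, i ≠ i' → ∃ j : J, D.colPart j = b ∧ M i j ≠ M i' j

/-- The cell `(a, b)` of the division contains at least `q` pairwise distinct columns. -/
def Division.CellHasDistinctCols {I J : Type*} [LinearOrder I] [LinearOrder J] {k : ℕ}
    {α : Type*} (D : Division I J k) (M : I → J → α) (a b : Fin k) (q : ℕ) : Prop :=
  ∃ S : Finset J, q ≤ S.card ∧ (∀ j ∈ S, D.colPart j = b) ∧
    ∀ j ∈ S, ∀ j' ∈ S, j ≠ j' → ∃ i : I, D.rowPart i = a ∧ M i j ≠ M i j'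

/-- The matrix `M` admits a rank-`k` division: a `k`-division each of whose cells has at
least `k` pairwise distinct rows or at least `k` pairwise distinct columns. -/
def HasRankDivision {I J : Type*} [LinearOrder I] [LinearOrder J] {α : Type*}
    (M : I → J → α) (k : ℕ) : Prop :=
  ∃ D : Division I J k, ∀ a b : Fin k,
    D.CellHasDistinctRows M a b k ∨ D.CellHasDistinctCols M a b k

/-- The grid rank of a matrix: the largest `k` such that `M` admits a rank-`k` division. -/
noncomputable def gridRank {I J : Type*} [LinearOrder I] [LinearOrder J] {α : Type*}
    (M : I → J → α) : ℕ :=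
  sSup {k : ℕ | HasRankDivision M k}

/-- The biadjacency matrix `Adj_≺(G⟨X,Y⟩)` of a graph `G` along a linear order of its
vertices: columns are indexed by `X` and rows by `Y`, each in increasing order, with entry
at `(y, x)` recording whether `x` and `y` are adjacent. -/
def biadjMatrix {V : Type*} [LinearOrder V] (G : SimpleGraph V) (X Y : Finset V) :
    {v // v ∈ Y} → {v // v ∈ X} → Prop :=
  fun y x => G.Adj y.1 x.1



/-!
In a rank-`m` division of the matrix with rows `Y ∪ Z`, every cell has `m` distinct rows or `m`
distinct columns. Once `m ≥ k²`, either the `Y`-rows or the `Z`-rows of the cell alone still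
give `k` distinct rows or `k` distinct columns: `m` distinct rows split into two parts, and a
column is determined by its `Y`-part and its `Z`-part. Cut the `m × m` grid of cells into
`k × k` blocks of `k × k` cells. If every block contains a cell that is good for `Y`, merging
the blocks is a rank-`k` division for `Y`. Otherwise some block consists of cells good for `Z`,
and merging everything around its `k` rows and `k` columns of cells is a rank-`k` division
for `Z`. So `f k = (k + 1)²` works.
-/

open Set Finset

/-- The cell condition of a rank-`k` division, for an arbitrary set `R` of rows and set `C` of
columns. -/
def IsRankCell {I J α : Type*} (M : I → J → α) (R : Set I) (C : Set J) (k : ℕ) : Prop :=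
  (∃ S : Finset I, k ≤ S.card ∧ (∀ i ∈ S, i ∈ R) ∧
    ∀ i ∈ S, ∀ i' ∈ S, i ≠ i' → ∃ j, j ∈ C ∧ M i j ≠ M i' j) ∨
  (∃ S : Finset J, k ≤ S.card ∧ (∀ j ∈ S, j ∈ C) ∧
    ∀ j ∈ S, ∀ j' ∈ S, j ≠ j' → ∃ i, i ∈ R ∧ M i j ≠ M i j')

namespace IsRankCell

variable {I I' J α : Type*} {M : I → J → α} {R R' : Set I} {C C' : Set J} {k m : ℕ}

theorem mono (h : IsRankCell M R C k) (hR : R ⊆ R') (hC : C ⊆ C') : IsRankCell M R' C' k := by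
  rcases h with ⟨S, hS, hSR, hSd⟩ | ⟨S, hS, hSC, hSd⟩
  · refine Or.inl ⟨S, hS, fun i hi => hR (hSR i hi), fun i hi i' hi' hne => ?_⟩
    obtain ⟨j, hj, hM⟩ := hSd i hi i' hi' hne
    exact ⟨j, hC hj, hM⟩
  · refine Or.inr ⟨S, hS, fun j hj => hC (hSC j hj), fun j hj j' hj' hne => ?_⟩
    obtain ⟨i, hi, hM⟩ := hSd j hj j' hj' hne
    exact ⟨i, hR hi, hM⟩

theorem nonempty (h : IsRankCell M R C k) (hk : 2 ≤ k) : R.Nonempty ∧ C.Nonempty := by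
  rcases h with ⟨S, hS, hSR, hSd⟩ | ⟨S, hS, hSC, hSd⟩
  · obtain ⟨i, hi, i', hi', hne⟩ := Finset.one_lt_card.mp (by omega : 1 < S.card)
    obtain ⟨j, hj, -⟩ := hSd i hi i' hi' hne
    exact ⟨⟨i, hSR i hi⟩, ⟨j, hj⟩⟩
  · obtain ⟨j, hj, j', hj', hne⟩ := Finset.one_lt_card.mp (by omega : 1 < S.card)
    obtain ⟨i, hi, -⟩ := hSd j hj j' hj' hne
    exact ⟨⟨i, hi⟩, ⟨j, hSC j hj⟩⟩

open Classical in
theorem of_le_card_image {S : Finset J} (hSC : ∀ j ∈ S, j ∈ C)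
    (hk : k ≤ (S.image fun j (i : R) => M i j).card) : IsRankCell M R C k := by
  obtain ⟨T, hTS, hinj, hT⟩ := Finset.exists_subset_injOn_image_eq_of_surjOn (S : Set J)
    (S.image fun j (i : R) => M i j) (by rw [coe_image]; exact surjOn_image _ _)
  refine Or.inr ⟨T, ?_, fun j hj => hSC j (hTS hj), fun j hj j' hj' hne => ?_⟩
  · rwa [← card_image_of_injOn hinj, hT]
  · obtain ⟨i, hi⟩ := Function.ne_iff.mp fun h => hne (hinj hj hj' h)
    exact ⟨i, i.2, hi⟩

theorem inter_or_inter {A B : Set I} (hAB : ∀ i, i ∈ A ∨ i ∈ B) (hm : k * k ≤ m)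
    (h : IsRankCell M R C m) : IsRankCell M (R ∩ A) C k ∨ IsRankCell M (R ∩ B) C k := by
  classical
  rcases h with ⟨S, hS, hSR, hSd⟩ | ⟨S, hS, hSC, hSd⟩
  · have side : ∀ A : Set I, k ≤ (S.filter (· ∈ A)).card → IsRankCell M (R ∩ A) C k :=
      fun A hA => Or.inl ⟨_, hA, fun i hi => ⟨hSR i (mem_filter.1 hi).1, (mem_filter.1 hi).2⟩,
        fun i hi i' hi' => hSd i (mem_filter.1 hi).1 i' (mem_filter.1 hi').1⟩
    have hcard : S.card ≤ (S.filter (· ∈ A)).card + (S.filter (· ∈ B)).card :=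
      (card_le_card fun i hi => (hAB i).elim (fun hA => mem_union_left _ (mem_filter.2 ⟨hi, hA⟩))
        (fun hB => mem_union_right _ (mem_filter.2 ⟨hi, hB⟩))).trans (card_union_le _ _)
    by_contra! hlt
    have hA := mt (side A) hlt.1
    have hB := mt (side B) hlt.2
    push Not at hA hB
    nlinarith
  · have hcard : S.card ≤ (S.image fun j (i : ↥(R ∩ A)) => M i j).card *
        (S.image fun j (i : ↥(R ∩ B)) => M i j).card := by
      rw [← card_product]
      refine card_le_card_of_injOn (fun j => (fun i : ↥(R ∩ A) => M i j, fun i : ↥(R ∩ B) => M i j))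
        (fun j hj => mem_product.2 ⟨mem_image_of_mem _ hj, mem_image_of_mem _ hj⟩) ?_
      intro j hj j' hj' heq
      by_contra hne
      obtain ⟨i, hiR, hi⟩ := hSd j hj j' hj' hne
      rcases hAB i with hiA | hiB
      · exact hi (congrFun (congrArg Prod.fst heq) ⟨i, hiR, hiA⟩)
      · exact hi (congrFun (congrArg Prod.snd heq) ⟨i, hiR, hiB⟩)
    by_contra! hlt
    have hA := mt (of_le_card_image hSC) hlt.1
    have hB := mt (of_le_card_image hSC) hlt.2
    push Not at hA hB
    have := Nat.mul_lt_mul'' hA hB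
    omega

theorem preimage {ι : I' → I} (hι : Function.Injective ι) (h : IsRankCell M (R ∩ range ι) C k) :
    IsRankCell (fun i' j => M (ι i') j) (ι ⁻¹' R) C k := by
  classical
  rcases h with ⟨S, hS, hSR, hSd⟩ | ⟨S, hS, hSC, hSd⟩
  · refine Or.inl ⟨S.preimage ι hι.injOn, ?_, fun i hi => (hSR _ (mem_preimage.1 hi)).1,
      fun i hi i' hi' hne => hSd _ (mem_preimage.1 hi) _ (mem_preimage.1 hi') (hι.ne hne)⟩
    rwa [card_preimage, filter_true_of_mem fun i hi => (hSR i hi).2]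
  · refine Or.inr ⟨S, hS, hSC, fun j hj j' hj' hne => ?_⟩
    obtain ⟨_, ⟨hiR, i', rfl⟩, hi⟩ := hSd j hj j' hj' hne
    exact ⟨i', hiR, hi⟩

end IsRankCell

def blockIndex {m k : ℕ} (hk : 0 < k) (s d : ℕ) (a : Fin m) : Fin k :=
  ⟨min (k - 1) ((a - s) / d), by omega⟩

theorem blockIndex_mono {m k : ℕ} (hk : 0 < k) (s d : ℕ) :
    Monotone (blockIndex (m := m) hk s d) := fun _ _ hab =>
  min_le_min_left _ (Nat.div_le_div_right (Nat.sub_le_sub_right hab s))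

theorem blockIndex_eq {m k : ℕ} (hk : 0 < k) {s d r : ℕ} {a : Fin m} {p : Fin k} (hr : r < d)
    (ha : (a : ℕ) = s + d * p + r) : blockIndex hk s d a = p := by
  ext
  have hd : 0 < d := by omega
  simp only [blockIndex, ha, add_assoc, Nat.add_sub_cancel_left, Nat.mul_add_div hd,
    Nat.div_eq_of_lt hr]
  omega

theorem exists_coarsening_of_forall_or {k m : ℕ} (hk : 0 < k) (hm : k * k ≤ m)
    {P Q : Fin m → Fin m → Prop} (h : ∀ a b, P a b ∨ Q a b) :
    ∃ φ ψ : Fin m → Fin k, Monotone φ ∧ Monotone ψ ∧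
      ((∀ p q, ∃ a b, φ a = p ∧ ψ b = q ∧ P a b) ∨
        (∀ p q, ∃ a b, φ a = p ∧ ψ b = q ∧ Q a b)) := by
  have hlt (p p' : Fin k) : k * p + p' < m := by
    have := Nat.mul_le_mul_left k (p.2 : (p : ℕ) + 1 ≤ k)
    rw [Nat.mul_succ] at this
    omega
  let cell (p p' : Fin k) : Fin m := ⟨k * p + p', hlt p p'⟩
  by_cases hP : ∀ p q, ∃ a b, blockIndex hk 0 k a = p ∧ blockIndex hk 0 k b = q ∧ P a b
  · exact ⟨_, _, blockIndex_mono hk 0 k, blockIndex_mono hk 0 k, Or.inl hP⟩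
  push Not at hP
  obtain ⟨p, q, hpq⟩ := hP
  have hblock (p p' : Fin k) : blockIndex hk 0 k (cell p p') = p :=
    blockIndex_eq hk p'.2 (by simp [cell])
  have hshift (p p' : Fin k) : blockIndex hk (k * p) 1 (cell p p') = p' :=
    blockIndex_eq hk one_pos (by simp [cell])
  exact ⟨_, _, blockIndex_mono hk (k * p) 1, blockIndex_mono hk (k * q) 1, Or.inr fun p' q' =>
    ⟨cell p p', cell q q', hshift p p', hshift q q',
      (h _ _).resolve_left (hpq _ _ (hblock p p') (hblock q q'))⟩⟩

section Division

variable {I I' I'' J α : Type*} [LinearOrder I] [LinearOrder I'] [LinearOrder I'']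
  [LinearOrder J] {M : I → J → α} {k m : ℕ}

theorem hasRankDivision_iff : HasRankDivision M k ↔
    ∃ D : Division I J k, ∀ a b, IsRankCell M (D.rowPart ⁻¹' {a}) (D.colPart ⁻¹' {b}) k :=
  Iff.rfl

theorem hasRankDivision_of_isRankCell (hk : 2 ≤ k) {r : I → Fin k} {c : J → Fin k}
    (hr : Monotone r) (hc : Monotone c) (h : ∀ p q, IsRankCell M (r ⁻¹' {p}) (c ⁻¹' {q}) k) :
    HasRankDivision M k :=
  let o : Fin k := ⟨0, by omega⟩
  ⟨⟨r, c, hr, hc, fun p => ((h p o).nonempty hk).1, fun q => ((h o q).nonempty hk).2⟩, h⟩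

theorem hasRankDivision_of_coarsening (hk : 2 ≤ k) {r : I → Fin m} {c : J → Fin m}
    (hr : Monotone r) (hc : Monotone c) {φ ψ : Fin m → Fin k} (hφ : Monotone φ)
    (hψ : Monotone ψ)
    (h : ∀ p q, ∃ a b, φ a = p ∧ ψ b = q ∧ IsRankCell M (r ⁻¹' {a}) (c ⁻¹' {b}) k) :
    HasRankDivision M k :=
  hasRankDivision_of_isRankCell hk (hφ.comp hr) (hψ.comp hc) fun p q => by
    obtain ⟨a, b, rfl, rfl, hab⟩ := h p q
    exact hab.mono (fun i hi => congrArg φ hi) (fun j hj => congrArg ψ hj)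

theorem HasRankDivision.comp_or_comp (hk : 2 ≤ k) (hm : k * k ≤ m) (ιY : I' ↪o I)
    (ιZ : I'' ↪o I) (hcover : ∀ i, i ∈ range ιY ∨ i ∈ range ιZ) (h : HasRankDivision M m) :
    HasRankDivision (fun y j => M (ιY y) j) k ∨ HasRankDivision (fun z j => M (ιZ z) j) k := by
  obtain ⟨D, hD⟩ := hasRankDivision_iff.mp h
  have hcells (a b : Fin m) :
      IsRankCell (fun y j => M (ιY y) j) ((D.rowPart ∘ ιY) ⁻¹' {a}) (D.colPart ⁻¹' {b}) k ∨
      IsRankCell (fun z j => M (ιZ z) j) ((D.rowPart ∘ ιZ) ⁻¹' {a}) (D.colPart ⁻¹' {b}) k :=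
    ((hD a b).inter_or_inter hcover hm).imp (.preimage ιY.injective) (.preimage ιZ.injective)
  obtain ⟨φ, ψ, hφ, hψ, hY | hZ⟩ := exists_coarsening_of_forall_or (by omega) hm hcells
  · exact .inl (hasRankDivision_of_coarsening hk (D.rowMono.comp ιY.monotone) D.colMono hφ hψ hY)
  · exact .inr (hasRankDivision_of_coarsening hk (D.rowMono.comp ιZ.monotone) D.colMono hφ hψ hZ)

theorem bddAbove_setOf_hasRankDivision [Finite J] (M : I → J → α) :
    BddAbove {k | HasRankDivision M k} :=
  ⟨Nat.card J, fun _ ⟨D, _⟩ => by simpa using Nat.card_le_card_of_surjective D.colPart D.colSurj⟩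

theorem HasRankDivision.le_gridRank [Finite J] (h : HasRankDivision M k) : k ≤ gridRank M :=
  le_csSup (bddAbove_setOf_hasRankDivision M) h

theorem hasRankDivision_gridRank [Finite J] (h : 0 < gridRank M) :
    HasRankDivision M (gridRank M) :=
  Nat.sSup_mem (Set.nonempty_iff_ne_empty.2 fun he => by simp [gridRank, he] at h)
    (bddAbove_setOf_hasRankDivision M)

end Division

/-- There is a function `f : ℕ → ℕ` such that for every `k ≥ 1`, every finite
graph `G`, every linear order on `V(G)`, and all sets `X, Y, Z ⊆ V(G)` with `X` disjoint
from `Y ∪ Z`: if the grid ranks of `Adj_≺(G⟨X,Y⟩)` and `Adj_≺(G⟨X,Z⟩)` are both less than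
`k`, then the grid rank of `Adj_≺(G⟨X, Y ∪ Z⟩)` is less than `f k`. -/
theorem stmt0 :
    ∃ f : ℕ → ℕ, ∀ k : ℕ, 1 ≤ k →
      ∀ (V : Type) [Fintype V] [LinearOrder V] [DecidableEq V]
        (G : SimpleGraph V) (X Y Z : Finset V),
        Disjoint X (Y ∪ Z) →
        gridRank (biadjMatrix G X Y) < k →
        gridRank (biadjMatrix G X Z) < k →
        gridRank (biadjMatrix G X (Y ∪ Z)) < f k := by
  refine ⟨fun k => (k + 1) * (k + 1), fun k hk V _ _ _ G X Y Z _ hY hZ => ?_⟩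
  by_contra! hYZ
  let ιY : {v // v ∈ Y} ↪o {v // v ∈ Y ∪ Z} :=
    .ofStrictMono (fun y => ⟨y, mem_union_left Z y.2⟩) fun _ _ h => h
  let ιZ : {v // v ∈ Z} ↪o {v // v ∈ Y ∪ Z} :=
    .ofStrictMono (fun z => ⟨z, mem_union_right Y z.2⟩) fun _ _ h => h
  have hcover (i : {v // v ∈ Y ∪ Z}) : i ∈ range ιY ∨ i ∈ range ιZ :=
    (mem_union.mp i.2).imp (fun h => ⟨⟨i, h⟩, rfl⟩) (fun h => ⟨⟨i, h⟩, rfl⟩)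
  have hpos : 0 < gridRank (biadjMatrix G X (Y ∪ Z)) := lt_of_lt_of_le (by positivity) hYZ
  rcases (hasRankDivision_gridRank hpos).comp_or_comp (by omega) hYZ ιY ιZ hcover with h | h
  · have h : HasRankDivision (biadjMatrix G X Y) (k + 1) := h
    exact absurd h.le_gridRank (by omega)
  · have h : HasRankDivision (biadjMatrix G X Z) (k + 1) := h
    exact absurd h.le_gridRank (by omega)
end

section
/- There is a function f : ℕ → ℕ such that for every integer k ≥ 1, every finite linearly ordered index set I, and all matrices M : I × I → Σ and N : I × I → Σ' (where Σ and Σ' are arbitrary sets), the following holds: if gr(M) < k and gr(N) < k, then the paired matrix P : I × I → Σ × Σ' defined by P(i,j) = (M(i,j), N(i,j)) satisfies gr(P) < f(k). (This is the statement, for two binary relations on a common ordered domain, that the grid rank of the superposition of two structures is bounded in terms of the grid ranks of the two structures.) -/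
/-! ### Auxiliary material -/

open Function Finset

section Aux

variable {I J : Type*} [LinearOrder I] [LinearOrder J]

/-- The canonical monotone surjection `Fin m → Fin k` for `1 ≤ k ≤ m`. -/
def squash (m k : ℕ) (hk : 1 ≤ k) : Fin m → Fin k :=
  fun z => ⟨min z.val (k - 1), by omega⟩

lemma squash_mono {m k : ℕ} (hk : 1 ≤ k) : Monotone (squash m k hk) := by
  intro a b hab
  simp only [squash, Fin.mk_le_mk]
  have : a.val ≤ b.val := hab
  omega

lemma squash_surj {m k : ℕ} (hk : 1 ≤ k) (h : k ≤ m) : Surjective (squash m k hk) := by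
  intro s
  refine ⟨⟨s.val, by omega⟩, ?_⟩
  apply Fin.ext
  simp only [squash]
  omega

/-- Transfer of distinct rows to a coarsened division. -/
lemma cell_rows_coarsen {m k : ℕ} {α : Type*} (D : Division I J m) (D' : Division I J k)
    (gr gc : Fin m → Fin k)
    (hr : ∀ i, D'.rowPart i = gr (D.rowPart i)) (hc : ∀ j, D'.colPart j = gc (D.colPart j))
    {M : I → J → α} {a b : Fin m} {q : ℕ}
    (h : D.CellHasDistinctRows M a b q) :
    D'.CellHasDistinctRows M (gr a) (gc b) q := by
  obtain ⟨S, hcard, hrow, hpair⟩ := h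
  refine ⟨S, hcard, fun i hi => by rw [hr, hrow i hi], fun i hi i' hi' hne => ?_⟩
  obtain ⟨j, hj, hMj⟩ := hpair i hi i' hi' hne
  exact ⟨j, by rw [hc, hj], hMj⟩

/-- Transfer of distinct columns to a coarsened division. -/
lemma cell_cols_coarsen {m k : ℕ} {α : Type*} (D : Division I J m) (D' : Division I J k)
    (gr gc : Fin m → Fin k)
    (hr : ∀ i, D'.rowPart i = gr (D.rowPart i)) (hc : ∀ j, D'.colPart j = gc (D.colPart j))
    {M : I → J → α} {a b : Fin m} {q : ℕ}
    (h : D.CellHasDistinctCols M a b q) :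
    D'.CellHasDistinctCols M (gr a) (gc b) q := by
  obtain ⟨S, hcard, hcol, hpair⟩ := h
  refine ⟨S, hcard, fun j hj => by rw [hc, hcol j hj], fun j hj j' hj' hne => ?_⟩
  obtain ⟨i, hi, hMi⟩ := hpair j hj j' hj' hne
  exact ⟨i, by rw [hr, hi], hMi⟩

/-- From a finset `S` and a map `u`, extract a subset of `S` of the same cardinality as the
image, on which `u` is injective. -/
lemma exists_rep {α β : Type*} [DecidableEq α] [DecidableEq β] (S : Finset α) (u : α → β) :
    ∃ S' : Finset α, S' ⊆ S ∧ (S.image u).card ≤ S'.card ∧ Set.InjOn u S' := by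
  classical
  set g : {y // y ∈ S.image u} → α := fun y => (Finset.mem_image.mp y.2).choose with hg
  have hgS : ∀ y, g y ∈ S := fun y => (Finset.mem_image.mp y.2).choose_spec.1
  have hgu : ∀ y, u (g y) = y.1 := fun y => (Finset.mem_image.mp y.2).choose_spec.2
  refine ⟨(S.image u).attach.image g, ?_, ?_, ?_⟩
  · intro i hi
    obtain ⟨y, _, rfl⟩ := Finset.mem_image.mp hi
    exact hgS y
  · have hinj : Function.Injective g := by
      intro y1 y2 h12
      apply Subtype.ext
      rw [← hgu y1, ← hgu y2, h12]
    rw [Finset.card_image_of_injective _ hinj, Finset.card_attach]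
  · intro i1 h1 i2 h2 h12
    simp only [Finset.coe_image, Set.mem_image] at h1 h2
    obtain ⟨y1, _, rfl⟩ := h1
    obtain ⟨y2, _, rfl⟩ := h2
    have : y1 = y2 := Subtype.ext (by rw [← hgu y1, ← hgu y2, h12])
    rw [this]

lemma nat_le_or {k a b : ℕ} (h : k * k ≤ a * b) : k ≤ a ∨ k ≤ b := by
  by_contra hc
  push_neg at hc
  exact absurd h (Nat.not_le.mpr (mul_lt_mul'' hc.1 hc.2 (Nat.zero_le _) (Nat.zero_le _)))

/-- Pair splitting for rows: if a cell has `k*k` distinct rows for the paired matrix,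
it has `k` distinct rows for one of the two matrices. -/
lemma split_rows {K k : ℕ} {S T : Type*} (D : Division I J K)
    (M : I → J → S) (N : I → J → T) (a b : Fin K)
    (h : D.CellHasDistinctRows (fun i j => (M i j, N i j)) a b (k * k)) :
    D.CellHasDistinctRows M a b k ∨ D.CellHasDistinctRows N a b k := by
  classical
  obtain ⟨Sf, hcard, hrow, hpair⟩ := h
  set u : I → ({j : J // D.colPart j = b} → S) := fun i j => M i j.1 with hu
  set v : I → ({j : J // D.colPart j = b} → T) := fun i j => N i j.1 with hv
  have hinj : Set.InjOn (fun i => (u i, v i)) Sf := by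
    intro i hi i' hi' he
    by_contra hne
    obtain ⟨j, hj, hP⟩ := hpair i hi i' hi' hne
    apply hP
    have h1 : u i = u i' := congrArg Prod.fst he
    have h2 : v i = v i' := congrArg Prod.snd he
    have e1 : M i j = M i' j := congrFun h1 ⟨j, hj⟩
    have e2 : N i j = N i' j := congrFun h2 ⟨j, hj⟩
    simp [e1, e2]
  have hle : Sf.card ≤ (Sf.image u).card * (Sf.image v).card := by
    calc Sf.card ≤ ((Sf.image u) ×ˢ (Sf.image v)).card := by
          refine Finset.card_le_card_of_injOn (fun i => (u i, v i)) (fun i hi => ?_) hinj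
          exact Finset.mem_product.mpr ⟨Finset.mem_image_of_mem _ hi,
            Finset.mem_image_of_mem _ hi⟩
      _ = _ := Finset.card_product _ _
  rcases nat_le_or (le_trans hcard hle) with hA | hB
  · left
    obtain ⟨S', hS'sub, hS'card, hS'inj⟩ := exists_rep Sf u
    refine ⟨S', le_trans hA hS'card, fun i hi => hrow i (hS'sub hi), ?_⟩
    intro i hi i' hi' hne
    have hune : u i ≠ u i' := fun he => hne (hS'inj hi hi' he)
    obtain ⟨j, hj⟩ := Function.ne_iff.mp hune
    exact ⟨j.1, j.2, hj⟩
  · right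
    obtain ⟨S', hS'sub, hS'card, hS'inj⟩ := exists_rep Sf v
    refine ⟨S', le_trans hB hS'card, fun i hi => hrow i (hS'sub hi), ?_⟩
    intro i hi i' hi' hne
    have hvne : v i ≠ v i' := fun he => hne (hS'inj hi hi' he)
    obtain ⟨j, hj⟩ := Function.ne_iff.mp hvne
    exact ⟨j.1, j.2, hj⟩

/-- Pair splitting for columns. -/
lemma split_cols {K k : ℕ} {S T : Type*} (D : Division I J K)
    (M : I → J → S) (N : I → J → T) (a b : Fin K)
    (h : D.CellHasDistinctCols (fun i j => (M i j, N i j)) a b (k * k)) :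
    D.CellHasDistinctCols M a b k ∨ D.CellHasDistinctCols N a b k := by
  classical
  obtain ⟨Sf, hcard, hcol, hpair⟩ := h
  set u : J → ({i : I // D.rowPart i = a} → S) := fun j i => M i.1 j with hu
  set v : J → ({i : I // D.rowPart i = a} → T) := fun j i => N i.1 j with hv
  have hinj : Set.InjOn (fun j => (u j, v j)) Sf := by
    intro j hj j' hj' he
    by_contra hne
    obtain ⟨i, hi, hP⟩ := hpair j hj j' hj' hne
    apply hP
    have h1 : u j = u j' := congrArg Prod.fst he
    have h2 : v j = v j' := congrArg Prod.snd he
    have e1 : M i j = M i j' := congrFun h1 ⟨i, hi⟩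
    have e2 : N i j = N i j' := congrFun h2 ⟨i, hi⟩
    simp [e1, e2]
  have hle : Sf.card ≤ (Sf.image u).card * (Sf.image v).card := by
    calc Sf.card ≤ ((Sf.image u) ×ˢ (Sf.image v)).card := by
          refine Finset.card_le_card_of_injOn (fun j => (u j, v j)) (fun j hj => ?_) hinj
          exact Finset.mem_product.mpr ⟨Finset.mem_image_of_mem _ hj,
            Finset.mem_image_of_mem _ hj⟩
      _ = _ := Finset.card_product _ _
  rcases nat_le_or (le_trans hcard hle) with hA | hB
  · left
    obtain ⟨S', hS'sub, hS'card, hS'inj⟩ := exists_rep Sf u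
    refine ⟨S', le_trans hA hS'card, fun j hj => hcol j (hS'sub hj), ?_⟩
    intro j hj j' hj' hne
    have hune : u j ≠ u j' := fun he => hne (hS'inj hj hj' he)
    obtain ⟨i, hi⟩ := Function.ne_iff.mp hune
    exact ⟨i.1, i.2, hi⟩
  · right
    obtain ⟨S', hS'sub, hS'card, hS'inj⟩ := exists_rep Sf v
    refine ⟨S', le_trans hB hS'card, fun j hj => hcol j (hS'sub hj), ?_⟩
    intro j hj j' hj' hne
    have hvne : v j ≠ v j' := fun he => hne (hS'inj hj hj' he)
    obtain ⟨i, hi⟩ := Function.ne_iff.mp hvne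
    exact ⟨i.1, i.2, hi⟩

/-- Monochromatic grid lemma: any 2-colouring of a big grid contains a monochromatic
`k × k` combinatorial grid. -/
lemma grid_lemma {K k : ℕ} (hk : 1 ≤ k) (hK : k * k * 4 ^ k ≤ K)
    (c : Fin K × Fin K → Bool) :
    ∃ (e : Bool) (x y : Fin k → Fin K), StrictMono x ∧ StrictMono y ∧
      ∀ s t, c (x s, y t) = e := by
  classical
  have h4 : 4 ≤ 4 ^ k := by
    calc 4 = 4 ^ 1 := by norm_num
    _ ≤ 4 ^ k := Nat.pow_le_pow_right (by norm_num) hk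
  have h2k : 2 * k ≤ K := by nlinarith
  -- column colour vectors restricted to the first 2*k rows
  set w : Fin K → (Fin (2 * k) → Bool) := fun j r => c (Fin.castLE h2k r, j) with hw
  have hcardfun : Fintype.card (Fin (2 * k) → Bool) = 4 ^ k := by
    rw [Fintype.card_fun, Fintype.card_fin, Fintype.card_bool,
      show (4 : ℕ) = 2 ^ 2 from rfl, ← pow_mul]
  have hpig : Fintype.card (Fin (2 * k) → Bool) * k ≤ Fintype.card (Fin K) := by
    rw [hcardfun, Fintype.card_fin]
    calc 4 ^ k * k = 1 * (k * 4 ^ k) := by ring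
    _ ≤ k * (k * 4 ^ k) := Nat.mul_le_mul_right _ hk
    _ = k * k * 4 ^ k := by ring
    _ ≤ K := hK
  obtain ⟨vv, hvv⟩ := Fintype.exists_le_card_fiber_of_mul_le_card w hpig
  obtain ⟨Y, hYsub, hYcard⟩ := Finset.exists_subset_card_eq hvv
  have hYmem : ∀ j ∈ Y, w j = vv := by
    intro j hj
    have := hYsub hj
    simp only [Finset.mem_filter] at this
    exact this.2
  -- within the common vector, one colour occurs ≥ k times
  have hpig2 : Fintype.card Bool * k ≤ Fintype.card (Fin (2 * k)) := by
    simp only [Fintype.card_bool, Fintype.card_fin]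
    omega
  obtain ⟨e, he⟩ := Fintype.exists_le_card_fiber_of_mul_le_card vv hpig2
  obtain ⟨X, hXsub, hXcard⟩ := Finset.exists_subset_card_eq he
  have hXmem : ∀ r ∈ X, vv r = e := by
    intro r hr
    have := hXsub hr
    simp only [Finset.mem_filter] at this
    exact this.2
  refine ⟨e, fun s => Fin.castLE h2k (X.orderEmbOfFin hXcard s), Y.orderEmbOfFin hYcard,
    ?_, ?_, ?_⟩
  · intro s t hst
    have := (X.orderEmbOfFin hXcard).strictMono hst
    simp only [Fin.lt_def, Fin.coe_castLE] at this ⊢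
    exact this
  · exact (Y.orderEmbOfFin hYcard).strictMono
  · intro s t
    have h1 : w (Y.orderEmbOfFin hYcard t) = vv :=
      hYmem _ (Y.orderEmbOfFin_mem hYcard t)
    have h2 : vv (X.orderEmbOfFin hXcard s) = e :=
      hXmem _ (X.orderEmbOfFin_mem hXcard s)
    calc c (Fin.castLE h2k (X.orderEmbOfFin hXcard s), Y.orderEmbOfFin hYcard t)
        = w (Y.orderEmbOfFin hYcard t) (X.orderEmbOfFin hXcard s) := rfl
      _ = vv (X.orderEmbOfFin hXcard s) := by rw [h1]
      _ = e := h2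

/-- A strictly monotone map `x : Fin k → Fin K` admits a monotone retraction-like map
`g : Fin K → Fin k` with `g (x s) = s`. -/
lemma exists_mono_retract {K k : ℕ} (hk : 1 ≤ k) (x : Fin k → Fin K) (hx : StrictMono x) :
    ∃ g : Fin K → Fin k, Monotone g ∧ ∀ s, g (x s) = s := by
  classical
  set cnt : Fin K → ℕ := fun z =>
    (Finset.univ.filter (fun t : Fin k => 0 < t.val ∧ x t ≤ z)).card with hcnt
  have hlt : ∀ z, cnt z < k := by
    intro z
    have hsub : (Finset.univ.filter (fun t : Fin k => 0 < t.val ∧ x t ≤ z)) ⊆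
        Finset.univ.erase ⟨0, hk⟩ := by
      intro t ht
      simp only [Finset.mem_filter] at ht
      refine Finset.mem_erase.mpr ⟨?_, Finset.mem_univ _⟩
      intro h0
      rw [h0] at ht
      exact absurd ht.2.1 (by simp)
    calc cnt z ≤ (Finset.univ.erase (⟨0, hk⟩ : Fin k)).card := Finset.card_le_card hsub
      _ = k - 1 := by rw [Finset.card_erase_of_mem (Finset.mem_univ _), Finset.card_univ,
            Fintype.card_fin]
      _ < k := by omega
  refine ⟨fun z => ⟨cnt z, hlt z⟩, ?_, ?_⟩
  · intro z z' hzz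
    simp only [Fin.mk_le_mk]
    apply Finset.card_le_card
    intro t ht
    simp only [Finset.mem_filter] at ht ⊢
    exact ⟨ht.1, ht.2.1, le_trans ht.2.2 hzz⟩
  · intro s
    apply Fin.ext
    have hset : (Finset.univ.filter (fun t : Fin k => 0 < t.val ∧ x t ≤ x s)) =
        (Finset.univ.filter (fun t : Fin k => 0 < t.val ∧ t ≤ s)) := by
      apply Finset.filter_congr
      intro t _
      simp [hx.le_iff_le]
    have hbij : (Finset.univ.filter (fun t : Fin k => 0 < t.val ∧ t ≤ s)).card =
        (Finset.Ioc 0 s.val).card := by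
      apply Finset.card_bij (fun t _ => t.val)
      · intro t ht
        simp only [Finset.mem_filter, Finset.mem_univ, true_and] at ht
        simp only [Finset.mem_Ioc]
        exact ⟨ht.1, ht.2⟩
      · intro t1 _ t2 _ h12
        exact Fin.ext h12
      · intro n hn
        simp only [Finset.mem_Ioc] at hn
        refine ⟨⟨n, lt_of_le_of_lt hn.2 s.2⟩, ?_, rfl⟩
        simp only [Finset.mem_filter, Finset.mem_univ, true_and]
        exact ⟨hn.1, by simp [Fin.le_def, hn.2]⟩
    show cnt (x s) = s.val
    calc cnt (x s) = (Finset.univ.filter (fun t : Fin k => 0 < t.val ∧ t ≤ s)).card :=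
          congrArg Finset.card hset
      _ = (Finset.Ioc 0 s.val).card := hbij
      _ = s.val := by rw [Nat.card_Ioc]; omega

/-- Key lemma: a rank-`K` division of the paired matrix with `K = k²·4ᵏ` yields
a rank-`k` division of one of the two matrices. -/
lemma main_lemma {S T : Type*} {k K : ℕ} (hk : 1 ≤ k) (hK : k * k * 4 ^ k ≤ K)
    (M : I → J → S) (N : I → J → T)
    (h : HasRankDivision (fun i j => (M i j, N i j)) K) :
    HasRankDivision M k ∨ HasRankDivision N k := by
  classical
  obtain ⟨D, hD⟩ := h
  have hKk : k * k ≤ K := le_trans (Nat.le_mul_of_pos_right _ (by positivity)) hK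
  -- each cell is good for M or good for N
  have hgood : ∀ a b : Fin K,
      (D.CellHasDistinctRows M a b k ∨ D.CellHasDistinctCols M a b k) ∨
      (D.CellHasDistinctRows N a b k ∨ D.CellHasDistinctCols N a b k) := by
    intro a b
    rcases hD a b with hrows | hcols
    · obtain ⟨Sf, hc, h1, h2⟩ := hrows
      rcases split_rows D M N a b ⟨Sf, le_trans hKk hc, h1, h2⟩ with hM | hN
      · exact Or.inl (Or.inl hM)
      · exact Or.inr (Or.inl hN)
    · obtain ⟨Sf, hc, h1, h2⟩ := hcols
      rcases split_cols D M N a b ⟨Sf, le_trans hKk hc, h1, h2⟩ with hM | hN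
      · exact Or.inl (Or.inr hM)
      · exact Or.inr (Or.inr hN)
  set c : Fin K × Fin K → Bool := fun p =>
    decide (D.CellHasDistinctRows M p.1 p.2 k ∨ D.CellHasDistinctCols M p.1 p.2 k) with hc
  obtain ⟨e, x, y, hxmono, hymono, hmono⟩ := grid_lemma hk hK c
  obtain ⟨gx, hgxmono, hgx⟩ := exists_mono_retract hk x hxmono
  obtain ⟨gy, hgymono, hgy⟩ := exists_mono_retract hk y hymono
  have hgxsurj : Surjective gx := fun s => ⟨x s, hgx s⟩
  have hgysurj : Surjective gy := fun s => ⟨y s, hgy s⟩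
  set D' : Division I J k :=
    ⟨gx ∘ D.rowPart, gy ∘ D.colPart, hgxmono.comp D.rowMono, hgymono.comp D.colMono,
      hgxsurj.comp D.rowSurj, hgysurj.comp D.colSurj⟩ with hD'
  have hDr : ∀ i, D'.rowPart i = gx (D.rowPart i) := fun i => rfl
  have hDc : ∀ j, D'.colPart j = gy (D.colPart j) := fun j => rfl
  cases e with
  | true =>
    -- every selected cell is good for M
    left
    refine ⟨D', fun s t => ?_⟩
    have := hmono s t
    rw [hc] at this
    simp only [decide_eq_true_eq] at this
    rcases this with hrows | hcols
    · have := cell_rows_coarsen D D' gx gy hDr hDc hrows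
      rw [hgx, hgy] at this
      exact Or.inl this
    · have := cell_cols_coarsen D D' gx gy hDr hDc hcols
      rw [hgx, hgy] at this
      exact Or.inr this
  | false =>
    right
    refine ⟨D', fun s t => ?_⟩
    have hfalse := hmono s t
    rw [hc] at hfalse
    have hnotM : ¬(D.CellHasDistinctRows M (x s) (y t) k ∨
        D.CellHasDistinctCols M (x s) (y t) k) := by
      intro hcontra
      simp [hcontra] at hfalse
    rcases hgood (x s) (y t) with hM | hN
    · exact absurd hM hnotM
    rcases hN with hrows | hcols
    · have := cell_rows_coarsen D D' gx gy hDr hDc hrows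
      rw [hgx, hgy] at this
      exact Or.inl this
    · have := cell_cols_coarsen D D' gx gy hDr hDc hcols
      rw [hgx, hgy] at this
      exact Or.inr this

/-- Monotonicity of rank divisions, downwards. -/
lemma HasRankDivision.mono {α : Type*} {m k : ℕ} (hk : 1 ≤ k) (hkm : k ≤ m)
    {M : I → J → α} (h : HasRankDivision M m) : HasRankDivision M k := by
  obtain ⟨D, hD⟩ := h
  set D' : Division I J k :=
    ⟨squash m k hk ∘ D.rowPart, squash m k hk ∘ D.colPart,
      (squash_mono hk).comp D.rowMono, (squash_mono hk).comp D.colMono,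
      (squash_surj hk hkm).comp D.rowSurj, (squash_surj hk hkm).comp D.colSurj⟩ with hD'
  refine ⟨D', fun s t => ?_⟩
  obtain ⟨a, ha⟩ := squash_surj hk hkm s
  obtain ⟨b, hb⟩ := squash_surj hk hkm t
  have hDr : ∀ i, D'.rowPart i = squash m k hk (D.rowPart i) := fun i => rfl
  have hDc : ∀ j, D'.colPart j = squash m k hk (D.colPart j) := fun j => rfl
  rcases hD a b with hrows | hcols
  · obtain ⟨Sf, hc, h1, h2⟩ := hrows
    have := cell_rows_coarsen D D' (squash m k hk) (squash m k hk) hDr hDc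
      ⟨Sf, le_trans hkm hc, h1, h2⟩
    rw [ha, hb] at this
    exact Or.inl this
  · obtain ⟨Sf, hc, h1, h2⟩ := hcols
    have := cell_cols_coarsen D D' (squash m k hk) (squash m k hk) hDr hDc
      ⟨Sf, le_trans hkm hc, h1, h2⟩
    rw [ha, hb] at this
    exact Or.inr this

/-- Over a finite index type, the set of ranks of divisions is bounded. -/
lemma rank_bddAbove {α : Type*} [Fintype I] (M : I → J → α) :
    BddAbove {k : ℕ | HasRankDivision M k} := by
  refine ⟨Fintype.card I, fun m hm => ?_⟩
  obtain ⟨D, _⟩ := hm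
  have := Fintype.card_le_of_surjective D.rowPart D.rowSurj
  simpa using this

end Aux

/-- There is a function `f : ℕ → ℕ` such that for every `k ≥ 1`, every finite
linearly ordered index set `I`, and all matrices `M : I × I → S`, `N : I × I → T` (with
arbitrary entry types): if `gr(M) < k` and `gr(N) < k` then the paired matrix
`(i,j) ↦ (M i j, N i j)` has grid rank `< f k`. -/
theorem stmt1 :
    ∃ f : ℕ → ℕ, ∀ k : ℕ, 1 ≤ k →
      ∀ (I : Type) [Fintype I] [LinearOrder I] (S T : Type*)
        (M : I → I → S) (N : I → I → T),
        gridRank M < k → gridRank N < k →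
        gridRank (fun i j => (M i j, N i j)) < f k := by
  refine ⟨fun k => k * k * 4 ^ k + 1, fun k hk I _ _ S T M N hM hN => ?_⟩
  set K := k * k * 4 ^ k with hKdef
  have hKpos : 1 ≤ K := by
    calc 1 = 1 * 1 * 1 := rfl
    _ ≤ k * k * 4 ^ k := Nat.mul_le_mul (Nat.mul_le_mul hk hk)
        (Nat.one_le_pow _ _ (by norm_num))
  have hub : ∀ m ∈ {m : ℕ | HasRankDivision (fun i j => (M i j, N i j)) m}, m ≤ K := by
    intro m hm
    by_contra hgt
    push_neg at hgt
    have hmK : HasRankDivision (fun i j => (M i j, N i j)) K :=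
      HasRankDivision.mono hKpos (le_of_lt hgt) hm
    rcases main_lemma hk (le_refl K) M N hmK with hMk | hNk
    · have : k ≤ gridRank M := le_csSup (rank_bddAbove M) hMk
      omega
    · have : k ≤ gridRank N := le_csSup (rank_bddAbove N) hNk
      omega
  have : gridRank (fun i j => (M i j, N i j)) ≤ K := csSup_le' hub
  exact Nat.lt_succ_of_le this
end

section
/- Let q ≥ 1, s ≥ 1 and m ≥ 1 be integers. Let M be a 0,1-matrix whose rows are partitioned into consecutive intervals R_1, …, R_m (in row order) and whose columns are partitioned into consecutive intervals C_1, …, C_m (in column order), and suppose that the zone R_a ∩ C_b contains only 0 entries whenever |a − b| ∉ {0, 1, s}. If M admits a rank-(11(q+1)) division, then some zone R_a ∩ C_b admits a rank-q division. -/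
/-!
Let `K = 11(q+1)` and look at the rank-`K` division `D'`. Each of its row parts meets an interval
of zone rows, and these `K` intervals form a non-decreasing chain; likewise for columns. Every
cell of `D'` has two distinct rows or columns, hence a `1` entry, so every row interval and every
column interval contain zone indices `x`, `y` with `|x - y| ∈ {0, 1, s}`. The points at such a
distance from an interval of width `w` lie in three windows of width `w + 2`, and a chain that
advances by `inc` every `step` parts can meet a window of width `ℓ` in only about
`step * ℓ / inc` parts.

If no `q` consecutive row parts of `D'` lie in a single zone row, the row chain advances by `1`
every `q` parts, which forces every column interval to have positive width. From then on the
columns advance by at least the smallest column width `W`, so every row interval has width at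
least `2W`, and symmetrically every column interval has width at least `4W`: impossible. Hence
`q` consecutive row parts lie in one zone row and, symmetrically, `q` consecutive column parts in
one zone column; the corresponding `q × q` block of cells of `D'` is a rank-`q` division of that
zone.
-/

open Finset

def BandAdj (s x y : ℕ) : Prop := max x y - min x y ∈ ({0, 1, s} : Set ℕ)

theorem BandAdj.symm {s x y : ℕ} (h : BandAdj s x y) : BandAdj s y x := by
  rwa [BandAdj, max_comm, min_comm]

theorem BandAdj.mem_neighbourhood {s x y Lo Hi : ℕ} (h : BandAdj s x y)
    (hy : y ∈ Set.Icc Lo Hi) :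
    x ∈ Set.Icc (Lo - 1) (Hi + 1) ∨ x ∈ Set.Icc (Lo + s) (Hi + s) ∨
      x ∈ Set.Icc (Lo - s) (Hi - s) := by
  simp only [BandAdj, Set.mem_insert_iff, Set.mem_singleton_iff] at h
  simp only [Set.mem_Icc] at hy ⊢
  omega

def ChainsNear (s K : ℕ) (alo ahi blo bhi : ℕ → ℕ) : Prop :=
  ∀ t < K, ∀ u < K,
    ∃ x ∈ Set.Icc (alo t) (ahi t), ∃ y ∈ Set.Icc (blo u) (bhi u), BandAdj s x y

theorem ChainsNear.symm {s K : ℕ} {alo ahi blo bhi : ℕ → ℕ}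
    (h : ChainsNear s K alo ahi blo bhi) : ChainsNear s K blo bhi alo ahi := fun u hu t ht =>
  let ⟨x, hx, y, hy, hxy⟩ := h t ht u hu
  ⟨y, hy, x, hx, hxy.symm⟩

structure IntervalChain (K : ℕ) (lo hi : ℕ → ℕ) : Prop where
  lo_le_hi : ∀ t < K, lo t ≤ hi t
  hi_le_lo_succ : ∀ t, t + 1 < K → hi t ≤ lo (t + 1)

def AdvancesBy (K step inc : ℕ) (hi : ℕ → ℕ) : Prop :=
  ∀ t, t + step < K → hi t + inc ≤ hi (t + step)

theorem AdvancesBy.iterate {K step inc : ℕ} {hi : ℕ → ℕ} (h : AdvancesBy K step inc hi)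
    {t : ℕ} : ∀ j, t + step * j < K → hi t + inc * j ≤ hi (t + step * j)
  | 0, _ => by simp
  | j + 1, hj => by
    simp only [Nat.mul_succ, ← Nat.add_assoc] at hj ⊢
    have hstep := h (t + step * j) hj
    have hprev := AdvancesBy.iterate h (t := t) j (by omega)
    omega

namespace IntervalChain

variable {K : ℕ} {lo hi : ℕ → ℕ} (hC : IntervalChain K lo hi)
include hC

theorem hi_le_lo {t t' : ℕ} (htt' : t < t') (ht' : t' < K) : hi t ≤ lo t' := by
  induction t', htt' using Nat.le_induction with
  | base => exact hC.hi_le_lo_succ t ht'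
  | succ t' htt' ih =>
    calc hi t ≤ lo t' := ih (by omega)
      _ ≤ hi t' := hC.lo_le_hi t' (by omega)
      _ ≤ lo (t' + 1) := hC.hi_le_lo_succ t' ht'

theorem lo_mono {t t' : ℕ} (htt' : t ≤ t') (ht' : t' < K) : lo t ≤ lo t' := by
  rcases htt'.eq_or_lt with rfl | htt'
  · rfl
  · exact (hC.lo_le_hi t (by omega)).trans (hC.hi_le_lo htt' ht')

theorem hi_mono {t t' : ℕ} (htt' : t ≤ t') (ht' : t' < K) : hi t ≤ hi t' := by
  rcases htt'.eq_or_lt with rfl | htt'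
  · rfl
  · exact (hC.hi_le_lo htt' ht').trans (hC.lo_le_hi t' ht')

theorem advancesBy_of_width {W : ℕ} (hW : ∀ t < K, lo t + W ≤ hi t) : AdvancesBy K 1 W hi :=
  fun t ht => (Nat.add_le_add_right (hC.hi_le_lo_succ t ht) W).trans (hW (t + 1) ht)

theorem advancesBy_of_not_run {n : ℕ} (hnorun : ∀ t, t + n < K → lo t < hi (t + n)) :
    AdvancesBy K (n + 1) 1 hi := fun t ht => by
  have hnext := hnorun (t + 1) (by omega)
  rw [Nat.add_right_comm] at hnext
  have := hC.hi_le_lo_succ t (by omega)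
  rw [← Nat.add_assoc]
  omega

theorem card_le_of_meets_Icc {step inc : ℕ} (hinc : 0 < inc) (hgrow : AdvancesBy K step inc hi)
    {a b ℓ : ℕ} (hab : b ≤ a + ℓ) {T : Finset ℕ}
    (hT : ∀ t ∈ T, t < K ∧ (Set.Icc (lo t) (hi t) ∩ Set.Icc a b).Nonempty) :
    #T ≤ step * (ℓ / inc + 1) + 1 := by
  rcases T.eq_empty_or_nonempty with rfl | hne
  · simp
  set t₁ := T.min' hne
  set t₂ := T.max' hne
  have hspan : #T ≤ t₂ + 1 - t₁ := by
    rw [← Nat.card_Icc]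
    exact card_le_card fun t ht => Finset.mem_Icc.2 ⟨T.min'_le t ht, T.le_max' t ht⟩
  by_contra hlarge
  set j := ℓ / inc + 1
  obtain ⟨-, x₁, ⟨-, hx₁⟩, ha, -⟩ := hT t₁ (T.min'_mem hne)
  obtain ⟨ht₂, x₂, ⟨hx₂, -⟩, -, hb⟩ := hT t₂ (T.max'_mem hne)
  have hfar : t₁ + step * j < t₂ := by omega
  -- the intervals between `t₁` and `t₂` push `x₂` at least `inc * j > ℓ` beyond `x₁`
  have : x₁ + inc * j ≤ x₂ :=
    calc x₁ + inc * j ≤ hi t₁ + inc * j := by omega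
      _ ≤ hi (t₁ + step * j) := hgrow.iterate j (by omega)
      _ ≤ lo t₂ := hC.hi_le_lo hfar ht₂
      _ ≤ x₂ := hx₂
  have : ℓ < inc * j := Nat.lt_mul_div_succ ℓ hinc
  omega

theorem length_le_of_forall_near {step inc s Lo Hi : ℕ} (hinc : 0 < inc)
    (hgrow : AdvancesBy K step inc hi)
    (hnear : ∀ t < K, ∃ x ∈ Set.Icc (lo t) (hi t), ∃ y ∈ Set.Icc Lo Hi, BandAdj s x y) :
    K ≤ 3 * (step * ((Hi - Lo + 2) / inc + 1) + 1) := by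
  classical
  set N := step * ((Hi - Lo + 2) / inc + 1) + 1
  let hits (a b : ℕ) := (range K).filter fun t => (Set.Icc (lo t) (hi t) ∩ Set.Icc a b).Nonempty
  have hcard (a b : ℕ) (hab : b ≤ a + (Hi - Lo + 2)) : #(hits a b) ≤ N :=
    hC.card_le_of_meets_Icc hinc hgrow hab fun t ht => by simpa [hits] using ht
  have hcover :
      range K ⊆ hits (Lo - 1) (Hi + 1) ∪ hits (Lo + s) (Hi + s) ∪ hits (Lo - s) (Hi - s) := by
    intro t ht
    obtain ⟨x, hx, y, hy, hxy⟩ := hnear t (Finset.mem_range.1 ht)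
    simp only [hits, Finset.mem_union, Finset.mem_filter, ht, true_and]
    rcases hxy.mem_neighbourhood hy with h | h | h
    exacts [.inl (.inl ⟨x, hx, h⟩), .inl (.inr ⟨x, hx, h⟩), .inr ⟨x, hx, h⟩]
  calc K = #(range K) := (card_range K).symm
    _ ≤ #(hits (Lo - 1) (Hi + 1)) + #(hits (Lo + s) (Hi + s)) + #(hits (Lo - s) (Hi - s)) :=
      (card_le_card hcover).trans <| (card_union_le _ _).trans <|
        Nat.add_le_add_right (card_union_le _ _) _
    _ ≤ N + N + N := by gcongr <;> apply hcard <;> omega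
    _ = 3 * N := by ring

theorem lt_of_advancesBy_one {n s Lo Hi : ℕ} (hgrow : AdvancesBy K (n + 1) 1 hi)
    (hK : 9 * n + 13 ≤ K)
    (hnear : ∀ t < K, ∃ x ∈ Set.Icc (lo t) (hi t), ∃ y ∈ Set.Icc Lo Hi, BandAdj s x y) :
    Lo < Hi := by
  have hlen := hC.length_le_of_forall_near one_pos hgrow hnear
  by_contra! hHi
  rw [Nat.sub_eq_zero_of_le hHi] at hlen
  norm_num at hlen
  omega

theorem two_mul_width_le {W s Lo Hi : ℕ} (hK : 16 ≤ K) (hW : 0 < W)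
    (hwidth : ∀ t < K, lo t + W ≤ hi t)
    (hnear : ∀ t < K, ∃ x ∈ Set.Icc (lo t) (hi t), ∃ y ∈ Set.Icc Lo Hi, BandAdj s x y) :
    Lo + 2 * W ≤ Hi := by
  have hlen := hC.length_le_of_forall_near hW (hC.advancesBy_of_width hwidth) hnear
  have := (Nat.le_div_iff_mul_le hW).1 (show 4 ≤ (Hi - Lo + 2) / W by omega)
  omega

end IntervalChain

theorem IntervalChain.exists_collapsed_run {K n s : ℕ} {alo ahi blo bhi : ℕ → ℕ}
    (hA : IntervalChain K alo ahi) (hB : IntervalChain K blo bhi) (hK : 9 * n + 16 ≤ K)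
    (hnear : ChainsNear s K alo ahi blo bhi) :
    ∃ t, t + n < K ∧ ahi (t + n) ≤ alo t := by
  by_contra! hnorun
  have hBpos (u : ℕ) (hu : u < K) : blo u < bhi u :=
    hA.lt_of_advancesBy_one (hA.advancesBy_of_not_run hnorun) (by omega) (hnear · · u hu)
  obtain ⟨u₀, hu₀, hmin⟩ :=
    (range K).exists_min_image (fun u => bhi u - blo u) (nonempty_range_iff.2 (by omega))
  rw [mem_range] at hu₀
  set W := bhi u₀ - blo u₀
  have hW : 0 < W := by have := hBpos u₀ hu₀; omega
  have hBW (u : ℕ) (hu : u < K) : blo u + W ≤ bhi u := by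
    have := hmin u (mem_range.2 hu); have := hBpos u hu; omega
  have hA2 (t : ℕ) (ht : t < K) : alo t + 2 * W ≤ ahi t :=
    hB.two_mul_width_le (by omega) hW hBW (hnear.symm · · t ht)
  have hB4 := hA.two_mul_width_le (by omega) (by omega) hA2 (hnear · · u₀ hu₀)
  omega

section Parts

variable {I : Type*} {K m : ℕ}

noncomputable def partLo (p : I → Fin K) (z : I → Fin m) (t : ℕ) : ℕ :=
  sInf ((fun i => (z i : ℕ)) '' {i | (p i : ℕ) = t})

noncomputable def partHi (p : I → Fin K) (z : I → Fin m) (t : ℕ) : ℕ :=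
  sSup ((fun i => (z i : ℕ)) '' {i | (p i : ℕ) = t})

variable {p : I → Fin K} {z : I → Fin m}

theorem partLo_le {i : I} {t : ℕ} (h : (p i : ℕ) = t) : partLo p z t ≤ z i :=
  Nat.sInf_le ⟨i, h, rfl⟩

theorem le_partHi {i : I} {t : ℕ} (h : (p i : ℕ) = t) : (z i : ℕ) ≤ partHi p z t :=
  le_csSup ⟨m, by rintro _ ⟨i, -, rfl⟩; exact (z i).isLt.le⟩ ⟨i, h, rfl⟩

theorem intervalChain_partLo_partHi [LinearOrder I] (hp : Monotone p) (hz : Monotone z)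
    (hsurj : Function.Surjective p) : IntervalChain K (partLo p z) (partHi p z) where
  lo_le_hi t ht := by
    obtain ⟨i, hi⟩ := hsurj ⟨t, ht⟩
    have hit : (p i : ℕ) = t := by rw [hi]
    exact (partLo_le hit).trans (le_partHi hit)
  hi_le_lo_succ t ht := by
    obtain ⟨i₀, hi₀⟩ := hsurj ⟨t, by omega⟩
    obtain ⟨i₁, hi₁⟩ := hsurj ⟨t + 1, ht⟩
    refine csSup_le ⟨_, i₀, congrArg Fin.val hi₀, rfl⟩ ?_
    rintro _ ⟨i, hi, rfl⟩
    refine le_csInf ⟨_, i₁, congrArg Fin.val hi₁, rfl⟩ ?_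
    rintro _ ⟨i', hi', rfl⟩
    exact hz (hp.reflect_lt (Fin.lt_def.2 (by simp_all))).le

theorem IntervalChain.exists_eq_of_collapsed_run
    (hC : IntervalChain K (partLo p z) (partHi p z)) (hsurj : Function.Surjective p)
    {t₀ n : ℕ} (ht₀ : t₀ + n < K) (hrun : partHi p z (t₀ + n) ≤ partLo p z t₀) :
    ∃ a : Fin m, ∀ i, t₀ ≤ (p i : ℕ) → (p i : ℕ) ≤ t₀ + n → z i = a := by
  have hconst (i : I) (h₁ : t₀ ≤ (p i : ℕ)) (h₂ : (p i : ℕ) ≤ t₀ + n) :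
      (z i : ℕ) = partLo p z t₀ := by
    have := hC.lo_mono h₁ (p i).isLt
    have := hC.hi_mono h₂ ht₀
    have := partLo_le (z := z) (rfl : (p i : ℕ) = p i)
    have := le_partHi (z := z) (rfl : (p i : ℕ) = p i)
    omega
  obtain ⟨i₀, hi₀⟩ := hsurj ⟨t₀, by omega⟩
  have hi₀' : (p i₀ : ℕ) = t₀ := by rw [hi₀]
  exact ⟨z i₀, fun i h₁ h₂ =>
    Fin.ext ((hconst i h₁ h₂).trans (hconst i₀ hi₀'.ge (by omega)).symm)⟩

/-- Parts `t₀, …, t₀ + n` of `p`, renumbered `0, …, n`; the parts outside are merged into the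
first and the last one. -/
def windowPart (p : I → Fin K) (t₀ n : ℕ) (i : I) : Fin (n + 1) :=
  Fin.clamp (p i - t₀) n

theorem windowPart_of_eq {t₀ n k : ℕ} {i : I} (h : (p i : ℕ) = t₀ + k) (hk : k ≤ n) :
    windowPart p t₀ n i = ⟨k, by omega⟩ :=
  Fin.ext (by simp only [windowPart, Fin.clamp, h]; omega)

theorem Monotone.windowPart [LinearOrder I] (hp : Monotone p) {t₀ n : ℕ} :
    Monotone (windowPart p t₀ n) :=
  fun i i' h => by
    have := Fin.le_def.1 (hp h)
    simp only [_root_.windowPart, Fin.clamp, Fin.mk_le_mk]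
    omega

theorem surjective_windowPart_subtype (hsurj : Function.Surjective p) {P : I → Prop}
    {t₀ n : ℕ} (ht₀ : t₀ + n < K) (hP : ∀ i, t₀ ≤ (p i : ℕ) → (p i : ℕ) ≤ t₀ + n → P i) :
    Function.Surjective fun i : {i // P i} => windowPart p t₀ n i := by
  intro k
  obtain ⟨i, hi⟩ := hsurj ⟨t₀ + k, by omega⟩
  have hpi : (p i : ℕ) = t₀ + k := by rw [hi]
  exact ⟨⟨i, hP i (by omega) (by omega)⟩, windowPart_of_eq hpi k.is_le⟩

end Parts

namespace Division

variable {I J α : Type*} [LinearOrder I] [LinearOrder J] {K : ℕ} {M : I → J → α}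
  {a b : Fin K} {r r' : ℕ}

theorem CellHasDistinctRows.mono {D : Division I J K} (h : D.CellHasDistinctRows M a b r)
    (hr : r' ≤ r) : D.CellHasDistinctRows M a b r' :=
  let ⟨S, hS, hrow, hsep⟩ := h
  ⟨S, hr.trans hS, hrow, hsep⟩

theorem CellHasDistinctCols.mono {D : Division I J K} (h : D.CellHasDistinctCols M a b r)
    (hr : r' ≤ r) : D.CellHasDistinctCols M a b r' :=
  let ⟨S, hS, hcol, hsep⟩ := h
  ⟨S, hr.trans hS, hcol, hsep⟩

theorem exists_true_of_cell {D : Division I J K} {M : I → J → Bool} (hr : 2 ≤ r)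
    (h : D.CellHasDistinctRows M a b r ∨ D.CellHasDistinctCols M a b r) :
    ∃ i j, D.rowPart i = a ∧ D.colPart j = b ∧ M i j = true := by
  rcases h with ⟨S, hS, hrow, hsep⟩ | ⟨S, hS, hcol, hsep⟩
  · obtain ⟨i, hi, i', hi', hne⟩ := one_lt_card.1 (by omega : 1 < #S)
    obtain ⟨j, hj, hM⟩ := hsep i hi i' hi' hne
    cases hij : M i j
    · exact ⟨i', j, hrow i' hi', hj, by simpa [hij] using hM.symm⟩
    · exact ⟨i, j, hrow i hi, hj, hij⟩
  · obtain ⟨j, hj, j', hj', hne⟩ := one_lt_card.1 (by omega : 1 < #S)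
    obtain ⟨i, hi, hM⟩ := hsep j hj j' hj' hne
    cases hij : M i j
    · exact ⟨i, j', hi, hcol j' hj', by simpa [hij] using hM.symm⟩
    · exact ⟨i, j, hi, hcol j hj, hij⟩

variable {P : I → Prop} {Q : J → Prop} {t₀ u₀ n : ℕ}

def window (D : Division I J K) (ht₀ : t₀ + n < K) (hu₀ : u₀ + n < K)
    (hP : ∀ i, t₀ ≤ (D.rowPart i : ℕ) → (D.rowPart i : ℕ) ≤ t₀ + n → P i)
    (hQ : ∀ j, u₀ ≤ (D.colPart j : ℕ) → (D.colPart j : ℕ) ≤ u₀ + n → Q j) :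
    Division {i // P i} {j // Q j} (n + 1) where
  rowPart i := windowPart D.rowPart t₀ n i
  colPart j := windowPart D.colPart u₀ n j
  rowMono := D.rowMono.windowPart.comp (Subtype.mono_coe _)
  colMono := D.colMono.windowPart.comp (Subtype.mono_coe _)
  rowSurj := surjective_windowPart_subtype D.rowSurj ht₀ hP
  colSurj := surjective_windowPart_subtype D.colSurj hu₀ hQ

variable (D : Division I J K) (ht₀ : t₀ + n < K) (hu₀ : u₀ + n < K)
  (hP : ∀ i, t₀ ≤ (D.rowPart i : ℕ) → (D.rowPart i : ℕ) ≤ t₀ + n → P i)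
  (hQ : ∀ j, u₀ ≤ (D.colPart j : ℕ) → (D.colPart j : ℕ) ≤ u₀ + n → Q j)

theorem window_cellHasDistinctRows {a b : Fin (n + 1)}
    (h : D.CellHasDistinctRows M ⟨t₀ + a, by omega⟩ ⟨u₀ + b, by omega⟩ r) :
    (D.window ht₀ hu₀ hP hQ).CellHasDistinctRows (fun i j => M i.1 j.1) a b r := by
  classical
  obtain ⟨S, hS, hrow, hsep⟩ := h
  have hrow' (i : I) (hi : i ∈ S) : (D.rowPart i : ℕ) = t₀ + a := by rw [hrow i hi]
  have hSP (i : I) (hi : i ∈ S) : P i := by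
    have := hrow' i hi
    exact hP i (by omega) (by omega)
  refine ⟨S.subtype P, ?_, fun i hi => ?_, fun i hi i' hi' hne => ?_⟩
  · rwa [card_subtype, filter_true_of_mem hSP]
  · exact windowPart_of_eq (hrow' i (mem_subtype.1 hi)) a.is_le
  · obtain ⟨j, hj, hM⟩ := hsep i (mem_subtype.1 hi) i' (mem_subtype.1 hi')
      (Subtype.coe_injective.ne hne)
    have hj' : (D.colPart j : ℕ) = u₀ + b := by rw [hj]
    exact ⟨⟨j, hQ j (by omega) (by omega)⟩, windowPart_of_eq hj' b.is_le, hM⟩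

theorem window_cellHasDistinctCols {a b : Fin (n + 1)}
    (h : D.CellHasDistinctCols M ⟨t₀ + a, by omega⟩ ⟨u₀ + b, by omega⟩ r) :
    (D.window ht₀ hu₀ hP hQ).CellHasDistinctCols (fun i j => M i.1 j.1) a b r := by
  classical
  obtain ⟨S, hS, hcol, hsep⟩ := h
  have hcol' (j : J) (hj : j ∈ S) : (D.colPart j : ℕ) = u₀ + b := by rw [hcol j hj]
  have hSQ (j : J) (hj : j ∈ S) : Q j := by
    have := hcol' j hj
    exact hQ j (by omega) (by omega)
  refine ⟨S.subtype Q, ?_, fun j hj => ?_, fun j hj j' hj' hne => ?_⟩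
  · rwa [card_subtype, filter_true_of_mem hSQ]
  · exact windowPart_of_eq (hcol' j (mem_subtype.1 hj)) b.is_le
  · obtain ⟨i, hi, hM⟩ := hsep j (mem_subtype.1 hj) j' (mem_subtype.1 hj')
      (Subtype.coe_injective.ne hne)
    have hi' : (D.rowPart i : ℕ) = t₀ + a := by rw [hi]
    exact ⟨⟨i, hP i (by omega) (by omega)⟩, windowPart_of_eq hi' a.is_le, hM⟩

include ht₀ hu₀ hP hQ in
theorem hasRankDivision_window
    (hD : ∀ a b, D.CellHasDistinctRows M a b K ∨ D.CellHasDistinctCols M a b K) :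
    HasRankDivision (fun (i : {i // P i}) (j : {j // Q j}) => M i.1 j.1) (n + 1) :=
  ⟨D.window ht₀ hu₀ hP hQ, fun a b => (hD _ _).imp
    (fun h => D.window_cellHasDistinctRows ht₀ hu₀ hP hQ (h.mono (by omega)))
    (fun h => D.window_cellHasDistinctCols ht₀ hu₀ hP hQ (h.mono (by omega)))⟩

end Division

theorem chainsNear_partLo_partHi {I J : Type*} [LinearOrder I] [LinearOrder J] {s m K : ℕ}
    {M : I → J → Bool} {D : Division I J m} {D' : Division I J K}
    (hzero : ∀ i j, max (D.rowPart i).val (D.colPart j).val - min (D.rowPart i).val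
      (D.colPart j).val ∉ ({0, 1, s} : Set ℕ) → M i j = false)
    (hD' : ∀ a b, D'.CellHasDistinctRows M a b K ∨ D'.CellHasDistinctCols M a b K)
    (hK : 2 ≤ K) :
    ChainsNear s K (partLo D'.rowPart D.rowPart) (partHi D'.rowPart D.rowPart)
      (partLo D'.colPart D.colPart) (partHi D'.colPart D.colPart) := by
  intro t ht u hu
  obtain ⟨i, j, hi, hj, hM⟩ := Division.exists_true_of_cell hK (hD' ⟨t, ht⟩ ⟨u, hu⟩)
  have hi' : (D'.rowPart i : ℕ) = t := by rw [hi]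
  have hj' : (D'.colPart j : ℕ) = u := by rw [hj]
  refine ⟨D.rowPart i, ⟨partLo_le hi', le_partHi hi'⟩,
    D.colPart j, ⟨partLo_le hj', le_partHi hj'⟩, ?_⟩
  by_contra hfar
  simp [hzero i j hfar] at hM

theorem stmt2_general (q s m : ℕ) (hq : 1 ≤ q)
    (I J : Type) [LinearOrder I] [LinearOrder J]
    (M : I → J → Bool) (D : Division I J m)
    (hzero : ∀ (i : I) (j : J),
      (max (D.rowPart i).val (D.colPart j).val - min (D.rowPart i).val (D.colPart j).val)
        ∉ ({0, 1, s} : Set ℕ) → M i j = false)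
    (hrank : HasRankDivision M (11 * (q + 1))) :
    ∃ a b : Fin m, HasRankDivision
      (fun (i : {i : I // D.rowPart i = a}) (j : {j : J // D.colPart j = b}) => M i.1 j.1)
      q := by
  obtain ⟨n, rfl⟩ : ∃ n, q = n + 1 := ⟨q - 1, by omega⟩
  obtain ⟨D', hD'⟩ := hrank
  have hrows := intervalChain_partLo_partHi D'.rowMono D.rowMono D'.rowSurj
  have hcols := intervalChain_partLo_partHi D'.colMono D.colMono D'.colSurj
  have hnear := chainsNear_partLo_partHi hzero hD' (by omega)
  obtain ⟨t₀, ht₀, hrun_rows⟩ := hrows.exists_collapsed_run hcols (n := n) (by omega) hnear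
  obtain ⟨u₀, hu₀, hrun_cols⟩ :=
    hcols.exists_collapsed_run hrows (n := n) (by omega) hnear.symm
  obtain ⟨a, ha⟩ := hrows.exists_eq_of_collapsed_run D'.rowSurj ht₀ hrun_rows
  obtain ⟨b, hb⟩ := hcols.exists_eq_of_collapsed_run D'.colSurj hu₀ hrun_cols
  exact ⟨a, b, D'.hasRankDivision_window ht₀ hu₀ ha hb hD'⟩

/-- Let `q, s, m ≥ 1`. Let `M` be a 0,1-matrix whose rows and columns are each
partitioned into `m` consecutive intervals (a `Division`), such that the zone `R_a ∩ C_b`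
contains only `0` entries whenever `|a - b| ∉ {0, 1, s}`. If `M` admits a
rank-`11(q+1)` division, then some zone `R_a ∩ C_b` admits a rank-`q` division. -/
theorem stmt2 (q s m : ℕ) (hq : 1 ≤ q) (hs : 1 ≤ s) (hm : 1 ≤ m)
    (I J : Type) [Fintype I] [LinearOrder I] [Fintype J] [LinearOrder J]
    (M : I → J → Bool) (D : Division I J m)
    (hzero : ∀ (i : I) (j : J),
      (max (D.rowPart i).val (D.colPart j).val - min (D.rowPart i).val (D.colPart j).val)
        ∉ ({0, 1, s} : Set ℕ) → M i j = false)
    (hrank : HasRankDivision M (11 * (q + 1))) :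
    ∃ a b : Fin m, HasRankDivision
      (fun (i : {i : I // D.rowPart i = a}) (j : {j : J // D.colPart j = b}) => M i.1 j.1)
      q :=
  stmt2_general q s m hq I J M D hzero hrank
end

section
/- There is a function f : ℕ → ℕ such that for every integer t ≥ 1 and every finite twin-free graph G that has an interval representation with the minimality property, with associated lexicographic order ≺: if Adj_≺(G) admits a rank-f(t) division, then G contains a semi-induced transversal pair T_t. -/
/-- An interval representation of a graph `G`: each vertex `v` is assigned a nonempty
closed real interval `[left v, right v]`, and distinct vertices are adjacent iff their
intervals intersect. -/
structure IntervalRep (V : Type*) (G : SimpleGraph V) where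
  left : V → ℝ
  right : V → ℝ
  le : ∀ v : V, left v ≤ right v
  adj_iff : ∀ u v : V, u ≠ v →
    (G.Adj u v ↔ (Set.Icc (left u) (right u) ∩ Set.Icc (left v) (right v)).Nonempty)

/-- The minimality property of an interval representation: whenever `ℓ_u < ℓ_w` there is a
vertex `v` with `ℓ_u ≤ r_v < ℓ_w`. -/
def IntervalRep.Minimal {V : Type*} {G : SimpleGraph V} (R : IntervalRep V G) : Prop :=
  ∀ u w : V, R.left u < R.left w → ∃ v : V, R.left u ≤ R.right v ∧ R.right v < R.left w

/-- The lexicographic (left-right) order on pairs. -/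
def lexLe {t : ℕ} (p q : Fin t × Fin t) : Prop :=
  p.1 < q.1 ∨ (p.1 = q.1 ∧ p.2 ≤ q.2)

/-- `G` contains a semi-induced generalized transversal pair of half-graphs `T_{t,ℓ}`:
pairwise disjoint families of pairwise distinct vertices `A = (a_{i,j})`,
`B_0, …, B_ℓ = (b^k_{i,j})`, `C = (c_{i,j})` (indices in `[t] × [t]`) such that
`a_{i,j} ~ b^0_{i',j'}` iff `(i,j) ≤_lex (i',j')`; consecutive `B` levels are matched:
`b^{k-1}_{i,j} ~ b^k_{i',j'}` iff `(i,j) = (i',j')`; and `b^ℓ_{i,j} ~ c_{i',j'}` iff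
`(j,i) ≤_lex (j',i')`. All other adjacencies are unconstrained. -/
def HasGTP {V : Type*} (G : SimpleGraph V) (t ℓ : ℕ) : Prop :=
  ∃ (a : Fin t × Fin t → V) (b : Fin (ℓ + 1) → Fin t × Fin t → V) (c : Fin t × Fin t → V),
    Function.Injective a ∧
    Function.Injective c ∧
    (Function.Injective fun x : Fin (ℓ + 1) × (Fin t × Fin t) => b x.1 x.2) ∧
    (∀ p q, a p ≠ c q) ∧
    (∀ k p q, a p ≠ b k q) ∧
    (∀ k p q, c p ≠ b k q) ∧
    (∀ p q, G.Adj (a p) (b 0 q) ↔ lexLe p q) ∧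
    (∀ (k : Fin (ℓ + 1)) (hk : k.val + 1 < ℓ + 1) (p q : Fin t × Fin t),
      G.Adj (b k p) (b ⟨k.val + 1, hk⟩ q) ↔ p = q) ∧
    (∀ p q, G.Adj (b (Fin.last ℓ) p) (c q) ↔ lexLe (p.2, p.1) (q.2, q.1))

/-- `G` has no pair of twins. -/
def TwinFree {V : Type*} (G : SimpleGraph V) : Prop :=
  ∀ u v : V, u ≠ v → ¬ (∀ z : V, z ≠ u → z ≠ v → (G.Adj z u ↔ G.Adj z v))


set_option linter.unusedSectionVars false
namespace TP

/-! ### Rank arithmetic for pairs -/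

def rk {t : ℕ} (p : Fin t × Fin t) : ℕ := t * p.1.val + p.2.val

lemma rk_lt_sq {t : ℕ} (p : Fin t × Fin t) : rk p < t ^ 2 := by
  have h2 := p.2.isLt
  have h1 : p.1.val + 1 ≤ t := p.1.isLt
  calc t * p.1.val + p.2.val < t * p.1.val + t := by omega
    _ = t * (p.1.val + 1) := by ring
    _ ≤ t * t := Nat.mul_le_mul_left t h1
    _ = t ^ 2 := (pow_two t).symm

lemma rk_lt_of_fst {t : ℕ} {p q : Fin t × Fin t} (h : p.1.val < q.1.val) : rk p < rk q := by
  have h2 := p.2.isLt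
  calc t * p.1.val + p.2.val < t * p.1.val + t := by omega
    _ = t * (p.1.val + 1) := by ring
    _ ≤ t * q.1.val := Nat.mul_le_mul_left t h
    _ ≤ t * q.1.val + q.2.val := Nat.le_add_right _ _

lemma rk_inj {t : ℕ} {p q : Fin t × Fin t} (h : rk p = rk q) : p = q := by
  rcases lt_trichotomy p.1.val q.1.val with hf | hf | hf
  · exact absurd h (Nat.ne_of_lt (rk_lt_of_fst hf))
  · have h1 : p.1 = q.1 := Fin.ext hf
    unfold rk at h
    rw [hf] at h
    have h2 : p.2.val = q.2.val := Nat.add_left_cancel h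
    exact Prod.ext h1 (Fin.ext h2)
  · exact absurd h.symm (Nat.ne_of_lt (rk_lt_of_fst hf))

lemma lexLe_iff_rk {t : ℕ} (p q : Fin t × Fin t) : lexLe p q ↔ rk p ≤ rk q := by
  constructor
  · rintro (h | ⟨h1, h2⟩)
    · exact le_of_lt (rk_lt_of_fst h)
    · unfold rk
      rw [show p.1.val = q.1.val from congrArg Fin.val h1]
      exact Nat.add_le_add_left h2 _
  · intro h
    rcases lt_trichotomy p.1.val q.1.val with hf | hf | hf
    · exact Or.inl hf
    · refine Or.inr ⟨Fin.ext hf, ?_⟩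
      unfold rk at h
      rw [hf] at h
      exact Nat.le_of_add_le_add_left h
    · exact absurd (rk_lt_of_fst hf) (by omega)

def unrk (t m : ℕ) (ht : 0 < t) : Fin t × Fin t :=
  (⟨m / t % t, Nat.mod_lt _ ht⟩, ⟨m % t, Nat.mod_lt _ ht⟩)

lemma rk_unrk {t m : ℕ} (ht : 0 < t) (hm : m < t ^ 2) : rk (unrk t m ht) = m := by
  have hdiv : m / t < t := by
    rw [Nat.div_lt_iff_lt_mul ht]
    calc m < t ^ 2 := hm
      _ = t * t := pow_two t
  unfold rk unrk
  simp only
  rw [Nat.mod_eq_of_lt hdiv]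
  exact Nat.div_add_mod m t

/-! ### Interval representation basics -/

variable {V : Type} [Fintype V] [LinearOrder V] {G : SimpleGraph V}

lemma adj_iff' (R : IntervalRep V G) {u v : V} (h : u ≠ v) :
    G.Adj u v ↔ (R.left v ≤ R.right u ∧ R.left u ≤ R.right v) := by
  rw [R.adj_iff u v h, Set.Icc_inter_Icc, Set.nonempty_Icc, sup_le_iff, le_inf_iff, le_inf_iff]
  constructor
  · rintro ⟨⟨-, h1⟩, h2, -⟩
    exact ⟨h2, h1⟩
  · rintro ⟨h1, h2⟩
    exact ⟨⟨R.le u, h2⟩, h1, R.le v⟩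

lemma lam_mono (R : IntervalRep V G)
    (hord : ∀ u v : V, (R.left u < R.left v ∨ (R.left u = R.left v ∧ R.right u < R.right v)) → u < v)
    {u v : V} (huv : u ≤ v) : R.left u ≤ R.left v := by
  by_contra h
  exact absurd (hord v u (Or.inl (lt_of_not_ge h))) (not_lt.2 huv)

lemma adj_of_lt (R : IntervalRep V G)
    (hord : ∀ u v : V, (R.left u < R.left v ∨ (R.left u = R.left v ∧ R.right u < R.right v)) → u < v)
    {u v : V} (huv : u < v) : G.Adj u v ↔ R.left v ≤ R.right u := by
  rw [adj_iff' R (ne_of_lt huv)]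
  constructor
  · exact fun h => h.1
  · exact fun h => ⟨h, le_trans (lam_mono R hord (le_of_lt huv)) (R.le v)⟩

lemma pair_inj (R : IntervalRep V G) (htf : TwinFree G) {u v : V}
    (hl : R.left u = R.left v) (hr : R.right u = R.right v) : u = v := by
  by_contra hne
  apply htf u v hne
  intro z hzu hzv
  rw [adj_iff' R hzu, adj_iff' R hzv, hl, hr]

lemma rho_lt (R : IntervalRep V G)
    (hord : ∀ u v : V, (R.left u < R.left v ∨ (R.left u = R.left v ∧ R.right u < R.right v)) → u < v)
    (htf : TwinFree G) {u v : V} (huv : u < v) (hl : R.left u = R.left v) :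
    R.right u < R.right v := by
  rcases lt_trichotomy (R.right u) (R.right v) with h | h | h
  · exact h
  · exact absurd (pair_inj R htf hl h) (ne_of_lt huv)
  · exact absurd (hord v u (Or.inr ⟨hl.symm, h⟩)) (not_lt.2 (le_of_lt huv))

lemma fiber_lt {k : ℕ} {P : V → Fin k} (hP : Monotone P) {u v : V} {A B : Fin k}
    (hu : P u = A) (hv : P v = B) (hAB : A < B) : u < v := by
  by_contra h
  have h2 := hP (not_lt.1 h : v ≤ u)
  rw [hu, hv] at h2
  exact absurd hAB (not_lt.2 h2)

/-! ### Diverse cells and anchored vertices -/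

def DivCell (G : SimpleGraph V) {k : ℕ} (P Q : V → Fin k) (a b : Fin k) : Prop :=
  (∃ S : Finset V, 3 ≤ S.card ∧ (∀ x ∈ S, P x = a) ∧
    ∀ x ∈ S, ∀ y ∈ S, x ≠ y → ∃ j, Q j = b ∧ ¬(G.Adj x j ↔ G.Adj y j)) ∨
  (∃ S : Finset V, 3 ≤ S.card ∧ (∀ x ∈ S, Q x = b) ∧
    ∀ x ∈ S, ∀ y ∈ S, x ≠ y → ∃ j, P j = a ∧ ¬(G.Adj x j ↔ G.Adj y j))

/-- From any diverse cell whose `P`-part lies entirely below its `Q`-part, we obtain a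
vertex of the `P`-part whose right endpoint is "anchored" between two left endpoints of
the `Q`-part. -/
lemma anchor (R : IntervalRep V G)
    (hord : ∀ u v : V, (R.left u < R.left v ∨ (R.left u = R.left v ∧ R.right u < R.right v)) → u < v)
    {k : ℕ} {P Q : V → Fin k} {a b : Fin k}
    (hcell : DivCell G P Q a b) (hsep : ∀ u v : V, P u = a → Q v = b → u < v) :
    ∃ x w₁ w₂ : V, P x = a ∧ Q w₁ = b ∧ Q w₂ = b ∧
      R.left w₁ ≤ R.right x ∧ R.right x < R.left w₂ := by
  rcases hcell with ⟨S, hS3, hSP, hsepS⟩ | ⟨S, hS3, hSQ, hsepS⟩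
  · -- S inside the lower (P) part
    have cross : ∀ x ∈ S, ∀ y ∈ S, x ≠ y → R.right x < R.right y →
        ∃ j, Q j = b ∧ R.right x < R.left j ∧ R.left j ≤ R.right y := by
      intro x hx y hy hxy hxy2
      obtain ⟨j, hjb, hdiff⟩ := hsepS x hx y hy hxy
      rw [adj_of_lt R hord (hsep x j (hSP x hx) hjb),
        adj_of_lt R hord (hsep y j (hSP y hy) hjb)] at hdiff
      by_cases h1 : R.left j ≤ R.right x
      · by_cases h2 : R.left j ≤ R.right y
        · exact absurd (iff_of_true h1 h2) hdiff
        · exact absurd (le_trans h1 (le_of_lt hxy2)) h2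
      · by_cases h2 : R.left j ≤ R.right y
        · exact ⟨j, hjb, lt_of_not_ge h1, h2⟩
        · exact absurd (iff_of_false h1 h2) hdiff
    have rne : ∀ x ∈ S, ∀ y ∈ S, x ≠ y → R.right x ≠ R.right y := by
      intro x hx y hy hxy h
      obtain ⟨j, hjb, hdiff⟩ := hsepS x hx y hy hxy
      rw [adj_of_lt R hord (hsep x j (hSP x hx) hjb),
        adj_of_lt R hord (hsep y j (hSP y hy) hjb), h] at hdiff
      exact hdiff Iff.rfl
    have key : ∀ u ∈ S, ∀ v ∈ S, ∀ w ∈ S, u ≠ v → v ≠ w →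
        R.right u < R.right v → R.right v < R.right w →
        ∃ x w₁ w₂ : V, P x = a ∧ Q w₁ = b ∧ Q w₂ = b ∧
          R.left w₁ ≤ R.right x ∧ R.right x < R.left w₂ := by
      intro u hu v hv w hw huv hvw h1 h2
      obtain ⟨j₁, hj₁, _, hj₁le⟩ := cross u hu v hv huv h1
      obtain ⟨j₂, hj₂, hj₂gt, _⟩ := cross v hv w hw hvw h2
      exact ⟨v, j₁, j₂, hSP v hv, hj₁, hj₂, hj₁le, hj₂gt⟩
    obtain ⟨x₁, x₂, x₃, hx₁, hx₂, hx₃, h12, h13, h23⟩ :=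
      Finset.two_lt_card_iff.1 (by omega : 2 < S.card)
    have t12 := rne x₁ hx₁ x₂ hx₂ h12
    have t13 := rne x₁ hx₁ x₃ hx₃ h13
    have t23 := rne x₂ hx₂ x₃ hx₃ h23
    rcases lt_trichotomy (R.right x₁) (R.right x₂) with o12 | o12 | o12
    · rcases lt_trichotomy (R.right x₂) (R.right x₃) with o23 | o23 | o23
      · exact key x₁ hx₁ x₂ hx₂ x₃ hx₃ h12 h23 o12 o23
      · exact absurd o23 t23
      · rcases lt_trichotomy (R.right x₁) (R.right x₃) with o13 | o13 | o13
        · exact key x₁ hx₁ x₃ hx₃ x₂ hx₂ h13 (Ne.symm h23) o13 o23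
        · exact absurd o13 t13
        · exact key x₃ hx₃ x₁ hx₁ x₂ hx₂ (Ne.symm h13) h12 o13 o12
    · exact absurd o12 t12
    · rcases lt_trichotomy (R.right x₁) (R.right x₃) with o13 | o13 | o13
      · exact key x₂ hx₂ x₁ hx₁ x₃ hx₃ (Ne.symm h12) h13 o12 o13
      · exact absurd o13 t13
      · rcases lt_trichotomy (R.right x₂) (R.right x₃) with o23 | o23 | o23
        · exact key x₂ hx₂ x₃ hx₃ x₁ hx₁ h23 (Ne.symm h13) o23 o13
        · exact absurd o23 t23
        · exact key x₃ hx₃ x₂ hx₂ x₁ hx₁ (Ne.symm h23) (Ne.symm h12) o23 o12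
  · -- S inside the upper (Q) part
    obtain ⟨x, hx, y, hy, hxy⟩ := Finset.one_lt_card.1 (by omega : 1 < S.card)
    obtain ⟨j, hja, hdiff⟩ := hsepS x hx y hy hxy
    rw [G.adj_comm x j, G.adj_comm y j,
      adj_of_lt R hord (hsep j x hja (hSQ x hx)),
      adj_of_lt R hord (hsep j y hja (hSQ y hy))] at hdiff
    by_cases h1 : R.left x ≤ R.right j
    · by_cases h2 : R.left y ≤ R.right j
      · exact absurd (iff_of_true h1 h2) hdiff
      · exact ⟨j, x, y, hja, hSQ x hx, hSQ y hy, h1, lt_of_not_ge h2⟩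
    · by_cases h2 : R.left y ≤ R.right j
      · exact ⟨j, y, x, hja, hSQ y hy, hSQ x hx, h2, lt_of_not_ge h1⟩
      · exact absurd (iff_of_false h1 h2) hdiff

end TP

namespace TP

variable {V : Type} [Fintype V] [LinearOrder V]

/-- The main construction: given a doubly-monotone pair of partitions with all cells
diverse, and a configuration of `2t²+1` "group" parts of `P` lying entirely below
`t²+2` "band" parts of `Q`, the graph contains a semi-induced transversal pair. -/
lemma main (G : SimpleGraph V) (R : IntervalRep V G) (hmin : R.Minimal)
    (hord : ∀ u v : V, (R.left u < R.left v ∨ (R.left u = R.left v ∧ R.right u < R.right v)) → u < v)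
    (htf : TwinFree G) (t : ℕ) (ht : 1 ≤ t) (k : ℕ)
    (P Q : V → Fin k) (hP : Monotone P) (hQ : Monotone Q)
    (hdiv : ∀ a b : Fin k, DivCell G P Q a b)
    (grp : Fin (2 * t ^ 2 + 1) → Fin k) (band : Fin (t ^ 2 + 2) → Fin k)
    (hgrp : StrictMono grp) (hband : StrictMono band)
    (hsep : ∀ (α : Fin (2 * t ^ 2 + 1)) (β : Fin (t ^ 2 + 2)) (u v : V),
      P u = grp α → Q v = band β → u < v) :
    HasGTP G t 0 := by
  have ht0 : 0 < t := ht
  have hrk : ∀ p : Fin t × Fin t, rk p < t ^ 2 := rk_lt_sq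
  -- index functions
  have gval : ∀ p : Fin t × Fin t, 2 * (t ^ 2 - 1 - rk p) + 1 < 2 * t ^ 2 + 1 := by
    intro p; have := hrk p; omega
  have bval : ∀ p : Fin t × Fin t, t ^ 2 - rk (p.2, p.1) < t ^ 2 + 2 := by
    intro p; omega
  set gIdx : (Fin t × Fin t) → Fin (2 * t ^ 2 + 1) :=
    fun p => ⟨2 * (t ^ 2 - 1 - rk p) + 1, gval p⟩ with hgIdx
  set bIdx : (Fin t × Fin t) → Fin (t ^ 2 + 2) :=
    fun p => ⟨t ^ 2 - rk (p.2, p.1), bval p⟩ with hbIdx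
  -- anchored b's
  have hanch : ∀ p : Fin t × Fin t, ∃ x w₁ w₂ : V, P x = grp (gIdx p) ∧
      Q w₁ = band (bIdx p) ∧ Q w₂ = band (bIdx p) ∧
      R.left w₁ ≤ R.right x ∧ R.right x < R.left w₂ :=
    fun p => anchor R hord (hdiv _ _) (fun u v hu hv => hsep _ _ u v hu hv)
  choose bb w1 w2 hbP hw1 hw2 hw1le hw2gt using hanch
  -- buffer vertices, anchored with respect to the top band
  have hbufE : ∀ m : Fin (t ^ 2 + 1), ∃ x w₁ w₂ : V,
      P x = grp ⟨2 * m.val, by omega⟩ ∧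
      Q w₁ = band ⟨t ^ 2 + 1, by omega⟩ ∧ Q w₂ = band ⟨t ^ 2 + 1, by omega⟩ ∧
      R.left w₁ ≤ R.right x ∧ R.right x < R.left w₂ :=
    fun m => anchor R hord (hdiv _ _) (fun u v hu hv => hsep _ _ u v hu hv)
  choose zz zw1 zw2 hzP hzw1 hzw2 hzle hzgt using hbufE
  -- group vertex order
  have hbgrp_lt : ∀ p q : Fin t × Fin t, rk p < rk q → bb q < bb p := by
    intro p q h
    refine fiber_lt hP (hbP q) (hbP p) (hgrp ?_)
    show gIdx q < gIdx p
    have h1 := hrk p; have h2 := hrk q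
    simp only [hgIdx, Fin.mk_lt_mk]
    omega
  have lam_le_rk : ∀ p q : Fin t × Fin t, rk p < rk q → R.left (bb q) ≤ R.left (bb p) :=
    fun p q h => lam_mono R hord (le_of_lt (hbgrp_lt p q h))
  -- strict decrease of left endpoints along the lexicographic rank
  have lam_lt_rk : ∀ p q : Fin t × Fin t, rk p < rk q → R.left (bb q) < R.left (bb p) := by
    intro p q h
    rcases lt_or_eq_of_le (lam_le_rk p q h) with h' | h'
    · exact h'
    · exfalso
      have hq := hrk q; have hp := hrk p
      set m : Fin (t ^ 2 + 1) := ⟨t ^ 2 - rk q, by omega⟩ with hm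
      have hzq : bb q < zz m := by
        refine fiber_lt hP (hbP q) (hzP m) (hgrp ?_)
        simp only [hgIdx, hm, Fin.mk_lt_mk]
        omega
      have hzp : zz m < bb p := by
        refine fiber_lt hP (hzP m) (hbP p) (hgrp ?_)
        simp only [hgIdx, hm, Fin.mk_lt_mk]
        omega
      have hlz : R.left (zz m) = R.left (bb p) := by
        refine le_antisymm (lam_mono R hord (le_of_lt hzp)) ?_
        rw [← h']
        exact lam_mono R hord (le_of_lt hzq)
      have hρ : R.right (zz m) < R.right (bb p) := rho_lt R hord htf hzp hlz
      have h1 : R.left (w2 p) ≤ R.left (zw1 m) := by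
        refine lam_mono R hord (le_of_lt (fiber_lt hQ (hw2 p) (hzw1 m) (hband ?_)))
        have := rk_lt_sq (p.2, p.1)
        simp only [hbIdx, Fin.mk_lt_mk]
        omega
      have h2 : R.right (bb p) < R.right (zz m) :=
        lt_of_lt_of_le (hw2gt p) (le_trans h1 (hzle m))
      exact absurd h2 (not_lt.2 hρ.le)
  have lam_le_rk' : ∀ p q : Fin t × Fin t, rk p ≤ rk q → R.left (bb q) ≤ R.left (bb p) := by
    intro p q h
    rcases lt_or_eq_of_le h with h' | h'
    · exact (lam_lt_rk p q h').le
    · rw [rk_inj h']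
  -- right endpoints versus band left endpoints
  have rho_lt_w1 : ∀ p q : Fin t × Fin t, rk (p.2, p.1) < rk (q.2, q.1) →
      R.right (bb q) < R.left (w1 p) := by
    intro p q h
    have h1 : R.left (w2 q) ≤ R.left (w1 p) := by
      refine lam_mono R hord (le_of_lt (fiber_lt hQ (hw2 q) (hw1 p) (hband ?_)))
      have := rk_lt_sq (q.2, q.1); have := rk_lt_sq (p.2, p.1)
      simp only [hbIdx, Fin.mk_lt_mk]
      omega
    exact lt_of_lt_of_le (hw2gt q) h1
  have F2 : ∀ p q : Fin t × Fin t,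
      R.left (w1 q) ≤ R.right (bb p) ↔ rk (p.2, p.1) ≤ rk (q.2, q.1) := by
    intro p q
    constructor
    · intro hle
      by_contra hlt
      push_neg at hlt
      exact absurd hle (not_le.2 (rho_lt_w1 q p hlt))
    · intro hle
      rcases lt_or_eq_of_le hle with h | h
      · have h1 : R.left (w1 q) ≤ R.left (w1 p) := by
          refine lam_mono R hord (le_of_lt (fiber_lt hQ (hw1 q) (hw1 p) (hband ?_)))
          have := rk_lt_sq (q.2, q.1); have := rk_lt_sq (p.2, p.1)
          simp only [hbIdx, Fin.mk_lt_mk]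
          omega
        exact le_trans h1 (hw1le p)
      · have hpq : p = q := by
          have h2 := rk_inj h
          exact Prod.ext (congrArg Prod.snd h2) (congrArg Prod.fst h2)
        rw [hpq]
        exact hw1le q
  -- the bottom buffer band
  obtain ⟨x₀, W1, W2, hx₀P, hW1, hW2, hW1le, hW2gt⟩ :=
    anchor R hord (hdiv (grp ⟨0, by omega⟩) (band ⟨0, by omega⟩))
      (fun u v hu hv => hsep _ _ u v hu hv)
  have hbW1 : ∀ p : Fin t × Fin t, R.left (bb p) ≤ R.left W1 := fun p =>
    lam_mono R hord (le_of_lt (hsep (gIdx p) ⟨0, by omega⟩ _ _ (hbP p) hW1))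
  have hW1W2 : R.left W1 < R.left W2 := lt_of_le_of_lt hW1le hW2gt
  -- the a-family, via minimality
  set ub : (Fin t × Fin t) → ℝ := fun p =>
    if rk p = 0 then R.left W2 else R.left (bb (unrk t (rk p - 1) ht0)) with hub
  have haE : ∀ p : Fin t × Fin t, ∃ x : V, R.left (bb p) ≤ R.right x ∧ R.right x < ub p := by
    intro p
    by_cases h0 : rk p = 0
    · have hlt : R.left (bb p) < R.left W2 := lt_of_le_of_lt (hbW1 p) hW1W2
      obtain ⟨x, hx1, hx2⟩ := hmin (bb p) W2 hlt
      refine ⟨x, hx1, ?_⟩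
      rw [hub]; simpa [h0] using hx2
    · have hrp' : rk (unrk t (rk p - 1) ht0) = rk p - 1 :=
        rk_unrk ht0 (by have := hrk p; omega)
      have hlt : R.left (bb p) < R.left (bb (unrk t (rk p - 1) ht0)) :=
        lam_lt_rk _ p (by omega)
      obtain ⟨x, hx1, hx2⟩ := hmin (bb p) (bb (unrk t (rk p - 1) ht0)) hlt
      refine ⟨x, hx1, ?_⟩
      rw [hub]; simpa [h0] using hx2
  choose aa ha1 ha2 using haE
  have Fa2 : ∀ p q : Fin t × Fin t, rk q < rk p → R.right (aa p) < R.left (bb q) := by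
    intro p q h
    have h0 : ¬ rk p = 0 := by omega
    have h2 := ha2 p
    rw [hub] at h2
    simp only [h0, if_false] at h2
    have hrp' : rk (unrk t (rk p - 1) ht0) = rk p - 1 :=
      rk_unrk ht0 (by have := hrk p; omega)
    rcases lt_or_eq_of_le (by omega : rk q ≤ rk (unrk t (rk p - 1) ht0)) with h' | h'
    · exact lt_trans h2 (lam_lt_rk q _ h')
    · rw [rk_inj h']
      exact h2
  have Fa3 : ∀ p : Fin t × Fin t, R.right (aa p) < R.left W2 := by
    intro p
    by_cases h0 : rk p = 0
    · have h2 := ha2 p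
      rw [hub] at h2
      simpa [h0] using h2
    · have h2 := ha2 p
      rw [hub] at h2
      simp only [h0, if_false] at h2
      exact lt_of_lt_of_le h2 ((hbW1 _).trans hW1W2.le)
  have F4 : ∀ p q : Fin t × Fin t, R.right (aa p) < R.left (w1 q) := by
    intro p q
    have hW2w1 : R.left W2 ≤ R.left (w1 q) := by
      refine lam_mono R hord (le_of_lt (fiber_lt hQ hW2 (hw1 q) (hband ?_)))
      have := rk_lt_sq (q.2, q.1)
      simp only [hbIdx, Fin.mk_lt_mk]
      omega
    exact lt_of_lt_of_le (Fa3 p) hW2w1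
  have F1 : ∀ p q : Fin t × Fin t, R.left (bb q) ≤ R.right (aa p) ↔ rk p ≤ rk q := by
    intro p q
    constructor
    · intro hle
      by_contra h
      push_neg at h
      exact absurd hle (not_le.2 (Fa2 p q h))
    · intro h
      exact le_trans (lam_le_rk' p q h) (ha1 p)
  -- injectivity and distinctness
  have haρ_lt : ∀ p q : Fin t × Fin t, rk p < rk q → R.right (aa q) < R.right (aa p) :=
    fun p q h => lt_of_lt_of_le (Fa2 q p h) (ha1 p)
  have hainj : Function.Injective aa := by
    intro p q h
    by_contra hne
    have hne' : rk p ≠ rk q := fun he => hne (rk_inj he)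
    rcases hne'.lt_or_gt with h' | h'
    · have := haρ_lt p q h'; rw [h] at this; exact lt_irrefl _ this
    · have := haρ_lt q p h'; rw [h] at this; exact lt_irrefl _ this
  have hbinj : Function.Injective bb := by
    intro p q h
    by_contra hne
    have hne' : rk p ≠ rk q := fun he => hne (rk_inj he)
    rcases hne'.lt_or_gt with h' | h'
    · have := lam_lt_rk p q h'; rw [h] at this; exact lt_irrefl _ this
    · have := lam_lt_rk q p h'; rw [h] at this; exact lt_irrefl _ this
  have hcl_lt : ∀ p q : Fin t × Fin t, rk (p.2, p.1) < rk (q.2, q.1) →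
      R.left (w1 q) < R.left (w1 p) :=
    fun p q h => lt_of_le_of_lt (hw1le q) (rho_lt_w1 p q h)
  have hcinj : Function.Injective w1 := by
    intro p q h
    by_contra hne
    have hsw : (p.2, p.1) ≠ (q.2, q.1) := by
      intro he
      exact hne (Prod.ext (congrArg Prod.snd he) (congrArg Prod.fst he))
    have hne' : rk (p.2, p.1) ≠ rk (q.2, q.1) := fun he => hsw (rk_inj he)
    rcases hne'.lt_or_gt with h' | h'
    · have := hcl_lt p q h'; rw [h] at this; exact lt_irrefl _ this
    · have := hcl_lt q p h'; rw [h] at this; exact lt_irrefl _ this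
  have hanec : ∀ p q : Fin t × Fin t, aa p ≠ w1 q := by
    intro p q he
    have h1 := lt_of_lt_of_le (F4 p q) (R.le (w1 q))
    rw [he] at h1
    exact lt_irrefl _ h1
  have haneb : ∀ p q : Fin t × Fin t, aa p ≠ bb q := by
    intro p q he
    have h1 := lt_of_lt_of_le (F4 p q) (hw1le q)
    rw [he] at h1
    exact lt_irrefl _ h1
  have hbltc : ∀ p q : Fin t × Fin t, bb p < w1 q :=
    fun p q => hsep _ _ _ _ (hbP p) (hw1 q)
  -- adjacency computations
  have adjAB : ∀ p q : Fin t × Fin t, G.Adj (aa p) (bb q) ↔ lexLe p q := by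
    intro p q
    rw [adj_iff' R (haneb p q), lexLe_iff_rk]
    have hsc : R.left (aa p) ≤ R.right (bb q) :=
      le_trans (R.le _) (le_trans (F4 p q).le (hw1le q))
    constructor
    · exact fun h => (F1 p q).1 h.1
    · exact fun h => ⟨(F1 p q).2 h, hsc⟩
  have adjBC : ∀ p q : Fin t × Fin t, G.Adj (bb p) (w1 q) ↔ lexLe (p.2, p.1) (q.2, q.1) := by
    intro p q
    rw [adj_iff' R (ne_of_lt (hbltc p q)), lexLe_iff_rk]
    have hsc : R.left (bb p) ≤ R.right (w1 q) :=
      le_trans (lam_mono R hord (hbltc p q).le) (R.le _)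
    constructor
    · exact fun h => (F2 p q).1 h.1
    · exact fun h => ⟨(F2 p q).2 h, hsc⟩
  -- assemble
  refine ⟨aa, fun _ => bb, w1, hainj, hcinj, ?_, fun p q => hanec p q,
    fun _ p q => haneb p q, fun _ p q => (ne_of_lt (hbltc q p)).symm,
    fun p q => adjAB p q, ?_, fun p q => adjBC p q⟩
  · intro x y h
    have h2 : bb x.2 = bb y.2 := h
    exact Prod.ext (Fin.ext (by omega)) (hbinj h2)
  · intro k' hk'
    exact absurd hk' (by omega)

end TP

/-- There is a function `f : ℕ → ℕ` such that for every `t ≥ 1` and every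
finite twin-free graph `G` with a minimal interval representation and its associated
lexicographic order: if the adjacency matrix of `G` along that order admits a rank-`f t`
division, then `G` contains a semi-induced transversal pair `T_t`. -/
theorem stmt3 :
    ∃ f : ℕ → ℕ, ∀ t : ℕ, 1 ≤ t →
      ∀ (V : Type) [Fintype V] [LinearOrder V] (G : SimpleGraph V) (R : IntervalRep V G),
        R.Minimal →
        (∀ u v : V,
          (R.left u < R.left v ∨ (R.left u = R.left v ∧ R.right u < R.right v)) → u < v) →
        TwinFree G →
        HasRankDivision (fun u v : V => G.Adj u v) (f t) →
        HasGTP G t 0 := by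
  classical
  refine ⟨fun t => 6 * t ^ 2 + 10, ?_⟩
  intro t ht V _ _ G R hmin hord htf hrank
  have hrank' : HasRankDivision (fun u v : V => G.Adj u v) (6 * t ^ 2 + 10) := hrank
  obtain ⟨D, hD⟩ := hrank'
  have hk3 : 3 ≤ 6 * t ^ 2 + 10 := by omega
  -- translate the rank division into diverse cells, in both orientations
  have hdiv1 : ∀ a b : Fin (6 * t ^ 2 + 10), TP.DivCell G D.rowPart D.colPart a b := by
    intro a b
    rcases hD a b with ⟨S, hc, hPa, hsepS⟩ | ⟨S, hc, hPa, hsepS⟩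
    · refine Or.inl ⟨S, le_trans hk3 hc, hPa, fun x hx y hy hxy => ?_⟩
      obtain ⟨j, hj, hne⟩ := hsepS x hx y hy hxy
      exact ⟨j, hj, fun hiff => hne (propext hiff)⟩
    · refine Or.inr ⟨S, le_trans hk3 hc, hPa, fun x hx y hy hxy => ?_⟩
      obtain ⟨i, hi, hne⟩ := hsepS x hx y hy hxy
      exact ⟨i, hi, fun hiff =>
        hne (propext ((G.adj_comm i x).trans (hiff.trans (G.adj_comm y i))))⟩
  have hdiv2 : ∀ a b : Fin (6 * t ^ 2 + 10), TP.DivCell G D.colPart D.rowPart a b := by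
    intro a b
    rcases hD b a with ⟨S, hc, hPa, hsepS⟩ | ⟨S, hc, hPa, hsepS⟩
    · refine Or.inr ⟨S, le_trans hk3 hc, hPa, fun x hx y hy hxy => ?_⟩
      obtain ⟨j, hj, hne⟩ := hsepS x hx y hy hxy
      exact ⟨j, hj, fun hiff => hne (propext hiff)⟩
    · refine Or.inl ⟨S, le_trans hk3 hc, hPa, fun x hx y hy hxy => ?_⟩
      obtain ⟨i, hi, hne⟩ := hsepS x hx y hy hxy
      exact ⟨i, hi, fun hiff =>
        hne (propext ((G.adj_comm i x).trans (hiff.trans (G.adj_comm y i))))⟩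
  -- the pivot: the minimum of the colPart fiber of index (6 * t ^ 2 + 10) - (t² + 2)
  have hβval : (6 * t ^ 2 + 10) - (t ^ 2 + 2) < (6 * t ^ 2 + 10) := by omega
  set β₀ : Fin (6 * t ^ 2 + 10) := ⟨(6 * t ^ 2 + 10) - (t ^ 2 + 2), hβval⟩ with hβ₀
  obtain ⟨u₀, hu₀⟩ := D.colSurj β₀
  have hFibne : (Finset.univ.filter (fun v : V => D.colPart v = β₀)).Nonempty :=
    ⟨u₀, by simp [hu₀]⟩
  set x₀ : V := (Finset.univ.filter (fun v : V => D.colPart v = β₀)).min' hFibne with hx₀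
  have hx₀mem : D.colPart x₀ = β₀ := by
    have h1 := Finset.min'_mem _ hFibne
    rw [← hx₀] at h1
    simpa using h1
  by_cases hcase : 2 * t ^ 2 + 1 ≤ (D.rowPart x₀).val
  · -- many row parts entirely below the top t²+2 column parts
    refine TP.main G R hmin hord htf t ht (6 * t ^ 2 + 10) D.rowPart D.colPart D.rowMono D.colMono hdiv1
      (fun α => ⟨α.val, by omega⟩)
      (fun β => ⟨(6 * t ^ 2 + 10) - (t ^ 2 + 2) + β.val, by omega⟩)
      (fun α α' h => by simpa [Fin.mk_lt_mk] using h)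
      (fun β β' h => by simp only [Fin.mk_lt_mk]; omega)
      ?_
    intro α β u v hu hv
    have h1 : u < x₀ := by
      by_contra h'
      have h2 := D.rowMono (not_lt.1 h' : x₀ ≤ u)
      rw [hu] at h2
      have h3 : (D.rowPart x₀).val ≤ α.val := h2
      omega
    have h2 : x₀ ≤ v := by
      by_cases hβz : β.val = 0
      · refine Finset.min'_le _ v ?_
        simp only [Finset.mem_filter, Finset.mem_univ, true_and]
        rw [hv, hβ₀]
        exact Fin.ext (show (6 * t ^ 2 + 10) - (t ^ 2 + 2) + β.val = (6 * t ^ 2 + 10) - (t ^ 2 + 2) by omega)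
      · by_contra h'
        have h3 := D.colMono (le_of_lt (not_le.1 h' : v < x₀))
        rw [hv, hx₀mem] at h3
        have h4 : (6 * t ^ 2 + 10) - (t ^ 2 + 2) + β.val ≤ (6 * t ^ 2 + 10) - (t ^ 2 + 2) := h3
        omega
    exact lt_of_lt_of_le h1 h2
  · -- many column parts entirely below many row parts: swap the roles
    push_neg at hcase
    refine TP.main G R hmin hord htf t ht (6 * t ^ 2 + 10) D.colPart D.rowPart D.colMono D.rowMono hdiv2
      (fun α => ⟨α.val, by omega⟩)
      (fun β => ⟨(D.rowPart x₀).val + 1 + β.val, by omega⟩)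
      (fun α α' h => by simpa [Fin.mk_lt_mk] using h)
      (fun β β' h => by simp only [Fin.mk_lt_mk]; omega)
      ?_
    intro α β u v hu hv
    have h1 : u < x₀ := by
      by_contra h'
      have h2 := D.colMono (not_lt.1 h' : x₀ ≤ u)
      rw [hu, hx₀mem] at h2
      have h3 : (6 * t ^ 2 + 10) - (t ^ 2 + 2) ≤ α.val := h2
      omega
    have h2 : x₀ < v := by
      by_contra h'
      have h3 := D.rowMono (not_lt.1 h' : v ≤ x₀)
      rw [hv] at h3
      have h4 : (D.rowPart x₀).val + 1 + β.val ≤ (D.rowPart x₀).val := h3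
      omega
    exact lt_trans h1 h2
end

section
/- Let t ≥ 1 and let G be a finite graph with an interval representation having the minimality property. Let A^1_1, …, A^1_{t²}, A^2_1, …, A^2_{t²} be pairwise disjoint vertex sets of G such that (1) start(A^1_1) < start(A^1_2) < … < start(A^1_{t²}) ≤ start(A^2_1) < start(A^2_2) < … < start(A^2_{t²}), and (2) for all i, j ∈ [t²], the 0,1-matrix whose rows are indexed by A^1_i and columns by A^2_j, with entry 1 iff the corresponding vertices are adjacent, has rank at least 2 (over the rationals). Then G contains a semi-induced transversal pair T_t. -/
/-- Arithmetic helper: strict lexicographic comparison of encoded pairs. -/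
lemma lex_mul_lt (t i j i' j' : ℕ) (hj : j < t) (h : i < i') :
    i * t + j < i' * t + j' := by
  calc i * t + j < i * t + t := by omega
    _ = (i + 1) * t := by ring
    _ ≤ i' * t := Nat.mul_le_mul_right t h
    _ ≤ i' * t + j' := Nat.le_add_right _ _

/-- `lexLe` corresponds to comparison of the lexicographic ranks. -/
lemma lexLe_iff {t : ℕ} (p q : Fin t × Fin t) :
    lexLe p q ↔ p.1.val * t + p.2.val ≤ q.1.val * t + q.2.val := by
  constructor
  · rintro (h | ⟨h1, h2⟩)
    · exact le_of_lt (lex_mul_lt t _ _ _ _ p.2.isLt h)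
    · have h1' : p.1.val = q.1.val := congrArg Fin.val h1
      have h2' : p.2.val ≤ q.2.val := h2
      rw [h1']
      omega
  · intro h
    rcases Nat.lt_trichotomy p.1.val q.1.val with h1 | h1 | h1
    · exact Or.inl h1
    · right
      refine ⟨Fin.ext h1, ?_⟩
      rw [h1] at h
      have : p.2.val ≤ q.2.val := by omega
      exact this
    · exact absurd h (Nat.not_le.2 (lex_mul_lt t _ _ _ _ q.2.isLt h1))

/-- From a 0/1 "threshold" matrix of rank at least 2, extract a strictly separated
quadruple of thresholds. -/
lemma rank2_extract {α β : Type*} [Fintype α] [Fintype β] (f : α → ℝ) (g : β → ℝ)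
    (h : 2 ≤ (Matrix.of fun (u : α) (v : β) => if g v ≤ f u then (1 : ℚ) else 0).rank) :
    ∃ u u' v v', g v ≤ f u ∧ f u < g v' ∧ g v' ≤ f u' := by
  by_contra hc
  push_neg at hc
  classical
  have heq : (Matrix.of fun (u : α) (v : β) => if g v ≤ f u then (1 : ℚ) else 0) =
      Matrix.vecMulVec (fun u => if ∃ v0, g v0 ≤ f u then (1 : ℚ) else 0)
        (fun v => if ∃ u0, g v ≤ f u0 then (1 : ℚ) else 0) := by
    ext u v
    simp only [Matrix.of_apply, Matrix.vecMulVec_apply]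
    by_cases h1 : g v ≤ f u
    · rw [if_pos h1, if_pos ⟨v, h1⟩, if_pos ⟨u, h1⟩, one_mul]
    · rw [if_neg h1]
      by_cases h2 : ∃ v0, g v0 ≤ f u
      · rw [if_pos h2, one_mul, if_neg]
        rintro ⟨u0, hu0⟩
        obtain ⟨v0, hv0⟩ := h2
        have := hc u u0 v0 v hv0 (not_le.mp h1)
        exact absurd hu0 (not_le.mpr this)
      · rw [if_neg h2, zero_mul]
  have hr : (Matrix.of fun (u : α) (v : β) => if g v ≤ f u then (1 : ℚ) else 0).rank ≤ 1 := by
    rw [heq, Matrix.vecMulVec_eq (Fin 1)]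
    exact le_trans (Matrix.rank_mul_le_right _ _)
      (le_trans (Matrix.rank_le_card_height _) (le_of_eq (Fintype.card_fin 1)))
  omega

/-- interval graph with minimal representation, `2t²` pairwise disjoint vertex
sets whose start intervals are ordered as
`start(A¹_1) < … < start(A¹_{t²}) ≤ start(A²_1) < … < start(A²_{t²})`, such that each
biadjacency matrix between `A¹_i` and `A²_j` has rank at least 2 over `ℚ`. Then `G`
contains a semi-induced transversal pair `T_t`. -/
theorem stmt4 (t : ℕ) (ht : 1 ≤ t) (V : Type) [Fintype V] (G : SimpleGraph V)
    (R : IntervalRep V G) (hmin : R.Minimal)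
    (A1 A2 : Fin (t * t) → Finset V)
    (hd1 : ∀ i j : Fin (t * t), i ≠ j → Disjoint (A1 i) (A1 j))
    (hd2 : ∀ i j : Fin (t * t), i ≠ j → Disjoint (A2 i) (A2 j))
    (hd12 : ∀ i j : Fin (t * t), Disjoint (A1 i) (A2 j))
    (hchain1 : ∀ (i : Fin (t * t)) (h : i.val + 1 < t * t),
      ∀ u ∈ A1 i, ∀ v ∈ A1 ⟨i.val + 1, h⟩, R.left u < R.left v)
    (hchain2 : ∀ (i : Fin (t * t)) (h : i.val + 1 < t * t),
      ∀ u ∈ A2 i, ∀ v ∈ A2 ⟨i.val + 1, h⟩, R.left u < R.left v)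
    (hmid : ∀ u ∈ A1 (⟨t * t - 1, Nat.sub_lt (Nat.mul_pos ht ht) Nat.one_pos⟩ : Fin (t * t)),
      ∀ v ∈ A2 (⟨0, Nat.mul_pos ht ht⟩ : Fin (t * t)), R.left u ≤ R.left v)
    (hrank : ∀ i j : Fin (t * t),
      2 ≤ Matrix.rank (Matrix.of fun (u : {x : V // x ∈ A1 i}) (v : {x : V // x ∈ A2 j}) =>
        @ite ℚ (G.Adj u.1 v.1) (Classical.propDecidable _) 1 0)) :
    HasGTP G t 0 := by
  classical
  have hN : 0 < t * t := Nat.mul_pos ht ht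
  -- every A1 i and A2 j is nonempty
  have hne1 : ∀ i, (A1 i).Nonempty := by
    intro i
    have h := (hrank i i).trans (Matrix.rank_le_card_height _)
    rw [Fintype.card_coe] at h
    exact Finset.card_pos.mp (by omega)
  have hne2 : ∀ j, (A2 j).Nonempty := by
    intro j
    have h := (hrank j j).trans (Matrix.rank_le_card_width _)
    rw [Fintype.card_coe] at h
    exact Finset.card_pos.mp (by omega)
  choose d1 hd1m using hne1
  choose d2 hd2m using hne2
  -- transitive chains of left endpoints
  have F1 : ∀ (d : ℕ) (i j : Fin (t * t)), i.val + 1 + d = j.val →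
      ∀ x ∈ A1 i, ∀ y ∈ A1 j, R.left x < R.left y := by
    intro d
    induction d with
    | zero =>
      intro i j hij x hx y hy
      have h : i.val + 1 < t * t := by have := j.isLt; omega
      have hj : j = ⟨i.val + 1, h⟩ := Fin.ext (show j.val = i.val + 1 by omega)
      subst hj
      exact hchain1 i h x hx y hy
    | succ d ih =>
      intro i j hij x hx y hy
      have h : i.val + 1 < t * t := by have := j.isLt; omega
      exact lt_trans (hchain1 i h x hx (d1 ⟨i.val + 1, h⟩) (hd1m _))
        (ih ⟨i.val + 1, h⟩ j (show i.val + 1 + 1 + d = j.val by omega) _ (hd1m _) y hy)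
  have F2 : ∀ (d : ℕ) (i j : Fin (t * t)), i.val + 1 + d = j.val →
      ∀ x ∈ A2 i, ∀ y ∈ A2 j, R.left x < R.left y := by
    intro d
    induction d with
    | zero =>
      intro i j hij x hx y hy
      have h : i.val + 1 < t * t := by have := j.isLt; omega
      have hj : j = ⟨i.val + 1, h⟩ := Fin.ext (show j.val = i.val + 1 by omega)
      subst hj
      exact hchain2 i h x hx y hy
    | succ d ih =>
      intro i j hij x hx y hy
      have h : i.val + 1 < t * t := by have := j.isLt; omega
      exact lt_trans (hchain2 i h x hx (d2 ⟨i.val + 1, h⟩) (hd2m _))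
        (ih ⟨i.val + 1, h⟩ j (show i.val + 1 + 1 + d = j.val by omega) _ (hd2m _) y hy)
  have F1' : ∀ (i j : Fin (t * t)), i.val < j.val →
      ∀ x ∈ A1 i, ∀ y ∈ A1 j, R.left x < R.left y := by
    intro i j hij
    exact F1 (j.val - i.val - 1) i j (by omega)
  have F2' : ∀ (i j : Fin (t * t)), i.val < j.val →
      ∀ x ∈ A2 i, ∀ y ∈ A2 j, R.left x < R.left y := by
    intro i j hij
    exact F2 (j.val - i.val - 1) i j (by omega)
  -- every A1 left endpoint is at most every A2 left endpoint
  have step0 : ∀ (i : Fin (t * t)), ∀ x ∈ A1 i, ∀ y ∈ A2 (⟨0, hN⟩ : Fin (t * t)),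
      R.left x ≤ R.left y := by
    intro i x hx y hy
    by_cases h : i.val = t * t - 1
    · have hi : i = ⟨t * t - 1, Nat.sub_lt hN Nat.one_pos⟩ := Fin.ext h
      exact hmid x (hi ▸ hx) y hy
    · have hlt : i.val < t * t - 1 := by have := i.isLt; omega
      exact le_of_lt (lt_of_lt_of_le
        (F1' i ⟨t * t - 1, by omega⟩ hlt x hx (d1 _) (hd1m _))
        (hmid (d1 _) (hd1m _) y hy))
  have F12 : ∀ (i j : Fin (t * t)), ∀ x ∈ A1 i, ∀ y ∈ A2 j, R.left x ≤ R.left y := by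
    intro i j x hx y hy
    by_cases h : j.val = 0
    · have hj : j = ⟨0, hN⟩ := Fin.ext (show j.val = 0 by omega)
      subst hj
      exact step0 i x hx y hy
    · exact (step0 i x hx (d2 ⟨0, hN⟩) (hd2m _)).trans
        (le_of_lt (F2' ⟨0, hN⟩ j (show (0:ℕ) < j.val by omega) _ (hd2m _) y hy))
  -- adjacency helpers
  have adj_of : ∀ x y : V, x ≠ y → R.left y ≤ R.right x → R.left x ≤ R.right y →
      G.Adj x y := by
    intro x y hne h1 h2
    rw [R.adj_iff x y hne]
    exact ⟨max (R.left x) (R.left y),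
      Set.mem_inter (Set.mem_Icc.mpr ⟨le_max_left _ _, max_le (R.le x) h1⟩)
        (Set.mem_Icc.mpr ⟨le_max_right _ _, max_le h2 (R.le y)⟩)⟩
  have not_adj : ∀ x y : V, R.right x < R.left y → ¬ G.Adj x y := by
    intro x y h hadj
    rw [R.adj_iff x y hadj.ne] at hadj
    obtain ⟨z, hz1, hz2⟩ := hadj
    have e1 := (Set.mem_Icc.mp hz1).2
    have e2 := (Set.mem_Icc.mp hz2).1
    linarith
  have adj_char : ∀ (i j : Fin (t * t)) (x : V), x ∈ A1 i → ∀ y ∈ A2 j,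
      (G.Adj x y ↔ R.left y ≤ R.right x) := by
    intro i j x hx y hy
    have hne : x ≠ y := fun h => Finset.disjoint_left.mp (hd12 i j) hx (h ▸ hy)
    constructor
    · intro hadj
      rw [R.adj_iff x y hne] at hadj
      obtain ⟨z, hz1, hz2⟩ := hadj
      have e1 := (Set.mem_Icc.mp hz1).2
      have e2 := (Set.mem_Icc.mp hz2).1
      linarith
    · intro h
      exact adj_of x y hne h ((F12 i j x hx y hy).trans (R.le y))
  -- extract threshold quadruples from the rank hypothesis
  have hquad : ∀ i j : Fin (t * t), ∃ u u' v v' : V,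
      u ∈ A1 i ∧ u' ∈ A1 i ∧ v ∈ A2 j ∧ v' ∈ A2 j ∧
      R.left v ≤ R.right u ∧ R.right u < R.left v' ∧ R.left v' ≤ R.right u' := by
    intro i j
    have h2 := hrank i j
    have heq : (Matrix.of fun (u : {x : V // x ∈ A1 i}) (v : {x : V // x ∈ A2 j}) =>
        @ite ℚ (G.Adj u.1 v.1) (Classical.propDecidable _) 1 0) =
        Matrix.of fun (u : {x : V // x ∈ A1 i}) (v : {x : V // x ∈ A2 j}) =>
          if R.left v.1 ≤ R.right u.1 then (1 : ℚ) else 0 := by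
      ext u v
      simp only [Matrix.of_apply]
      by_cases h : G.Adj u.1 v.1
      · rw [if_pos h, if_pos ((adj_char i j u.1 u.2 v.1 v.2).mp h)]
      · rw [if_neg h, if_neg (fun hc => h ((adj_char i j u.1 u.2 v.1 v.2).mpr hc))]
    rw [heq] at h2
    obtain ⟨u, u', v, v', e1, e2, e3⟩ :=
      rank2_extract (fun (u : {x : V // x ∈ A1 i}) => R.right u.1)
        (fun (v : {x : V // x ∈ A2 j}) => R.left v.1) h2
    exact ⟨u.1, u'.1, v.1, v'.1, u.2, u'.2, v.2, v'.2, e1, e2, e3⟩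
  choose uu uu' vvv vvv' huA hu'A hvA hv'A hvu huv' hv'u' using hquad
  -- lexicographic rank
  let sfun : Fin t × Fin t → ℕ := fun p => p.1.val * t + p.2.val
  have hslt : ∀ p : Fin t × Fin t, sfun p < t * t := by
    intro p
    show p.1.val * t + p.2.val < t * t
    have := lex_mul_lt t p.1.val p.2.val t 0 p.2.isLt p.1.isLt
    omega
  have hsinj : ∀ p q : Fin t × Fin t, sfun p = sfun q → p = q := by
    intro p q h
    have h' : p.1.val * t + p.2.val = q.1.val * t + q.2.val := h
    have h1 : p.1.val = q.1.val := by
      rcases Nat.lt_trichotomy p.1.val q.1.val with hlt | he | hlt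
      · exact absurd h' (Nat.ne_of_lt (lex_mul_lt t _ _ _ _ p.2.isLt hlt))
      · exact he
      · exact absurd h'.symm (Nat.ne_of_lt (lex_mul_lt t _ _ _ _ q.2.isLt hlt))
    have h2 : p.2.val = q.2.val := by rw [h1] at h'; omega
    exact Prod.ext (Fin.ext h1) (Fin.ext h2)
  have hlex : ∀ p q : Fin t × Fin t, lexLe p q ↔ sfun p ≤ sfun q := fun p q => lexLe_iff p q
  -- index maps
  let I1 : Fin t × Fin t → Fin (t * t) := fun q => ⟨t * t - 1 - sfun q, by omega⟩
  let I2 : Fin t × Fin t → Fin (t * t) := fun q => ⟨t * t - 1 - sfun (q.2, q.1), by omega⟩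
  -- the chosen vertices
  let u : Fin t × Fin t → V := fun q => uu (I1 q) (I2 q)
  let u' : Fin t × Fin t → V := fun q => uu' (I1 q) (I2 q)
  let v : Fin t × Fin t → V := fun q => vvv (I1 q) (I2 q)
  let v' : Fin t × Fin t → V := fun q => vvv' (I1 q) (I2 q)
  have hu : ∀ q, u q ∈ A1 (I1 q) := fun q => huA _ _
  have hu' : ∀ q, u' q ∈ A1 (I1 q) := fun q => hu'A _ _
  have hv : ∀ q, v q ∈ A2 (I2 q) := fun q => hvA _ _
  have hv' : ∀ q, v' q ∈ A2 (I2 q) := fun q => hv'A _ _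
  have h1 : ∀ q, R.left (v q) ≤ R.right (u q) := fun q => hvu _ _
  have h2 : ∀ q, R.right (u q) < R.left (v' q) := fun q => huv' _ _
  have h3 : ∀ q, R.left (v' q) ≤ R.right (u' q) := fun q => hv'u' _ _
  -- injectivity of the index maps
  have injI1 : ∀ q q' : Fin t × Fin t, q ≠ q' → I1 q ≠ I1 q' := by
    intro q q' hne hEq
    apply hne
    apply hsinj
    have hval := congrArg Fin.val hEq
    have hval' : t * t - 1 - sfun q = t * t - 1 - sfun q' := hval
    have := hslt q
    have := hslt q'
    omega
  have injI2 : ∀ q q' : Fin t × Fin t, q ≠ q' → I2 q ≠ I2 q' := by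
    intro q q' hne hEq
    apply hne
    have hval := congrArg Fin.val hEq
    have hval' : t * t - 1 - sfun (q.2, q.1) = t * t - 1 - sfun (q'.2, q'.1) := hval
    have := hslt (q.2, q.1)
    have := hslt (q'.2, q'.1)
    have hh := hsinj (q.2, q.1) (q'.2, q'.1) (by omega)
    exact Prod.ext (congrArg Prod.snd hh) (congrArg Prod.fst hh)
  -- monotonicity of the chosen left endpoints
  have monoU : ∀ q q' : Fin t × Fin t, sfun q ≤ sfun q' → R.left (u q') ≤ R.left (u q) := by
    intro q q' h
    rcases eq_or_lt_of_le h with he | hlt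
    · have := hsinj q q' he
      subst this
      exact le_refl _
    · refine le_of_lt (F1' (I1 q') (I1 q) ?_ (u q') (hu q') (u q) (hu q))
      show t * t - 1 - sfun q' < t * t - 1 - sfun q
      have := hslt q
      have := hslt q'
      omega
  have strictU : ∀ q q' : Fin t × Fin t, sfun q < sfun q' → R.left (u q') < R.left (u q) := by
    intro q q' hlt
    refine F1' (I1 q') (I1 q) ?_ (u q') (hu q') (u q) (hu q)
    show t * t - 1 - sfun q' < t * t - 1 - sfun q
    have := hslt q
    have := hslt q'
    omega
  have monoV : ∀ q q' : Fin t × Fin t, sfun (q.2, q.1) ≤ sfun (q'.2, q'.1) →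
      R.left (v q') ≤ R.left (v q) := by
    intro q q' h
    rcases eq_or_lt_of_le h with he | hlt
    · have hh := hsinj (q.2, q.1) (q'.2, q'.1) he
      have : q = q' := Prod.ext (congrArg Prod.snd hh) (congrArg Prod.fst hh)
      subst this
      exact le_refl _
    · refine le_of_lt (F2' (I2 q') (I2 q) ?_ (v q') (hv q') (v q) (hv q))
      show t * t - 1 - sfun (q'.2, q'.1) < t * t - 1 - sfun (q.2, q.1)
      have := hslt (q.2, q.1)
      have := hslt (q'.2, q'.1)
      omega
  -- the predecessor map
  let pred : Fin t × Fin t → Fin t × Fin t := fun p =>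
    (⟨(sfun p - 1) / t, by
        have := hslt p
        exact (Nat.div_lt_iff_lt_mul ht).mpr (by omega)⟩,
     ⟨(sfun p - 1) % t, Nat.mod_lt _ ht⟩)
  have hpred : ∀ p : Fin t × Fin t, sfun (pred p) = sfun p - 1 := by
    intro p
    show (sfun p - 1) / t * t + (sfun p - 1) % t = sfun p - 1
    rw [Nat.mul_comm ((sfun p - 1) / t) t]
    exact Nat.div_add_mod _ t
  -- the `a`-vertices from minimality
  have ha_ex : ∀ p : Fin t × Fin t, sfun p ≠ 0 →
      ∃ x : V, R.left (u p) ≤ R.right x ∧ R.right x < R.left (u (pred p)) := by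
    intro p hp
    exact hmin _ _ (strictU (pred p) p (by rw [hpred]; omega))
  choose w hw1 hw2 using ha_ex
  let p0 : Fin t × Fin t := (⟨0, ht⟩, ⟨0, ht⟩)
  have hsp0 : sfun p0 = 0 := by
    show 0 * t + 0 = 0
    omega
  have hs0 : ∀ p : Fin t × Fin t, sfun p = 0 → p = p0 := fun p h =>
    hsinj p p0 (by rw [h, hsp0])
  let a : Fin t × Fin t → V := fun p => if h : sfun p = 0 then u' p0 else w p h
  have ha0 : ∀ p (h : sfun p = 0), a p = u' p0 := fun p h => dif_pos h
  have haw : ∀ p (h : ¬ sfun p = 0), a p = w p h := fun p h => dif_neg h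
  have key1 : ∀ p (h : sfun p ≠ 0), R.left (u p) ≤ R.right (a p) := by
    intro p h
    rw [haw p h]
    exact hw1 p h
  have key2 : ∀ p (h : sfun p ≠ 0), R.right (a p) < R.left (u (pred p)) := by
    intro p h
    rw [haw p h]
    exact hw2 p h
  -- A1-left ≤ A2-left specializations
  have L12 : ∀ q q' : Fin t × Fin t, R.left (u q) ≤ R.left (v q') :=
    fun q q' => F12 _ _ _ (hu q) _ (hv q')
  have L12' : ∀ q q' : Fin t × Fin t, R.left (u' q) ≤ R.left (v q') :=
    fun q q' => F12 _ _ _ (hu' q) _ (hv q')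
  have L12v' : ∀ q q' : Fin t × Fin t, R.left (u q) ≤ R.left (v' q') :=
    fun q q' => F12 _ _ _ (hu q) _ (hv' q')
  -- distinctness lemmas
  have haneb : ∀ p q : Fin t × Fin t, a p ≠ u q := by
    intro p q
    by_cases hp : sfun p = 0
    · rw [ha0 p hp]
      by_cases hq : sfun q = 0
      · rw [hs0 q hq]
        intro h
        have h5 := (h2 p0).trans_le (h3 p0)
        rw [h] at h5
        exact lt_irrefl _ h5
      · have hne : q ≠ p0 := fun e => hq (e ▸ hsp0)
        intro h
        exact Finset.disjoint_left.mp (hd1 (I1 p0) (I1 q) (injI1 p0 q (Ne.symm hne)))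
          (hu' p0) (h ▸ hu q)
    · intro h
      have h5 := ((key2 p hp).trans_le (L12 (pred p) q)).trans_le (h1 q)
      rw [h] at h5
      exact lt_irrefl _ h5
  have hanec : ∀ p q : Fin t × Fin t, a p ≠ v q := by
    intro p q
    by_cases hp : sfun p = 0
    · rw [ha0 p hp]
      exact fun h => Finset.disjoint_left.mp (hd12 (I1 p0) (I2 q)) (hu' p0) (h ▸ hv q)
    · intro h
      have h5 := ((key2 p hp).trans_le (L12 (pred p) q)).trans_le (R.le (v q))
      rw [h] at h5
      exact lt_irrefl _ h5
  have hcneb : ∀ p q : Fin t × Fin t, v p ≠ u q :=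
    fun p q h => Finset.disjoint_left.mp (hd12 (I1 q) (I2 p)) (hu q) (h ▸ hv p)
  -- now assemble the transversal pair
  refine ⟨a, fun _ q => u q, v, ?_, ?_, ?_, ?_, ?_, ?_, ?_, ?_, ?_⟩
  · -- a injective
    intro p q h
    by_cases hp : sfun p = 0 <;> by_cases hq : sfun q = 0
    · rw [hs0 p hp, hs0 q hq]
    · exfalso
      rw [ha0 p hp, haw q hq] at h
      have h5 := ((hw2 q hq).trans_le (L12v' (pred q) p0)).trans_le (h3 p0)
      rw [← h] at h5
      exact lt_irrefl _ h5
    · exfalso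
      rw [ha0 q hq, haw p hp] at h
      have h5 := ((hw2 p hp).trans_le (L12v' (pred p) p0)).trans_le (h3 p0)
      rw [h] at h5
      exact lt_irrefl _ h5
    · rcases Nat.lt_trichotomy (sfun p) (sfun q) with hlt | he | hlt
      · exfalso
        have hle : sfun p ≤ sfun (pred q) := by rw [hpred]; omega
        have h5 := (key2 q hq).trans_le ((monoU p (pred q) hle).trans (key1 p hp))
        rw [h] at h5
        exact lt_irrefl _ h5
      · exact hsinj p q he
      · exfalso
        have hle : sfun q ≤ sfun (pred p) := by rw [hpred]; omega
        have h5 := (key2 p hp).trans_le ((monoU q (pred p) hle).trans (key1 q hq))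
        rw [← h] at h5
        exact lt_irrefl _ h5
  · -- c injective
    intro p q h
    by_contra hne
    exact Finset.disjoint_left.mp (hd2 _ _ (injI2 p q hne)) (hv p) (h ▸ hv q)
  · -- b injective
    intro x y h
    simp only at h
    have h2' : x.2 = y.2 := by
      by_contra hne
      exact Finset.disjoint_left.mp (hd1 _ _ (injI1 _ _ hne)) (hu x.2) (h ▸ hu y.2)
    have h1' : x.1 = y.1 := by
      have hx := x.1.isLt
      have hy := y.1.isLt
      exact Fin.ext (by omega)
    exact Prod.ext h1' h2'
  · -- a ≠ c
    exact hanec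
  · -- a ≠ b
    exact fun k p q => haneb p q
  · -- c ≠ b
    exact fun k p q => hcneb p q
  · -- adjacency a-b
    intro p q
    show G.Adj (a p) (u q) ↔ lexLe p q
    rw [hlex p q]
    by_cases hp : sfun p = 0
    · apply iff_of_true
      · apply adj_of _ _ (haneb p q)
        · rw [ha0 p hp]
          exact (F12 _ _ _ (hu q) _ (hv' p0)).trans (h3 p0)
        · rw [ha0 p hp]
          exact (L12' p0 q).trans (h1 q)
      · omega
    · by_cases hle : sfun p ≤ sfun q
      · apply iff_of_true
        · apply adj_of _ _ (haneb p q)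
          · exact (monoU p q hle).trans (key1 p hp)
          · exact (R.le (a p)).trans ((key2 p hp).le.trans ((L12 (pred p) q).trans (h1 q)))
        · exact hle
      · apply iff_of_false
        · apply not_adj
          have hle' : sfun q ≤ sfun (pred p) := by rw [hpred]; omega
          exact (key2 p hp).trans_le (monoU q (pred p) hle')
        · exact hle
  · -- adjacency b-b (vacuous)
    intro k hk p q
    exact absurd hk (by omega)
  · -- adjacency b-c
    intro p q
    show G.Adj (u p) (v q) ↔ lexLe (p.2, p.1) (q.2, q.1)
    rw [hlex (p.2, p.1) (q.2, q.1)]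
    by_cases hle : sfun (p.2, p.1) ≤ sfun (q.2, q.1)
    · apply iff_of_true
      · apply adj_of _ _ (Ne.symm (hcneb q p))
        · exact (monoV p q hle).trans (h1 p)
        · exact (L12 p q).trans (R.le (v q))
      · exact hle
    · apply iff_of_false
      · apply not_adj
        refine (h2 p).trans (F2' (I2 p) (I2 q) ?_ _ (hv' p) _ (hv q))
        show t * t - 1 - sfun (p.2, p.1) < t * t - 1 - sfun (q.2, q.1)
        have := hslt (p.2, p.1)
        have := hslt (q.2, q.1)
        omega
      · exact hle
end

section
/- For every finite bipartite graph G, the graph Π(G) is a directed path graph. -/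
/-- A directed path model of a graph `G`: a finite oriented tree (an orientation `arc` of a
tree) together with, for each vertex `v` of `G`, a directed path in the tree (a sequence of
pairwise distinct nodes consecutively joined by arcs), such that distinct vertices of `G`
are adjacent iff their paths share a node. -/
structure DPModel (V : Type) (G : SimpleGraph V) where
  N : Type
  fintypeN : Fintype N
  arc : N → N → Prop
  arc_irrefl : ∀ x : N, ¬ arc x x
  arc_asymm : ∀ x y : N, arc x y → ¬ arc y x
  isTree : (SimpleGraph.fromRel arc).IsTree
  len : V → ℕ
  path : (v : V) → Fin (len v + 1) → N
  path_inj : ∀ v : V, Function.Injective (path v)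
  path_arc : ∀ (v : V) (i : Fin (len v)), arc (path v i.castSucc) (path v i.succ)
  adj_iff : ∀ u v : V, u ≠ v →
    (G.Adj u v ↔ ∃ z : N, (∃ i, path u i = z) ∧ (∃ j, path v j = z))

/-- Vertex set of `Π(G)` for a bipartite graph with parts `A`, `B` and edge relation `E`:
the two sides plus one vertex for each edge. -/
abbrev PiV (A B : Type) (E : A → B → Prop) : Type := A ⊕ B ⊕ {p : A × B // E p.1 p.2}

/-- The edges of `Π(G)`: each edge-vertex `x_{ab}` is adjacent to `a`, to `b`, and to every
other edge-vertex; there are no other edges. -/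
def PiRel {A B : Type} (E : A → B → Prop) : PiV A B E → PiV A B E → Prop
  | Sum.inr (Sum.inr e), Sum.inl a => e.1.1 = a
  | Sum.inr (Sum.inr e), Sum.inr (Sum.inl b) => e.1.2 = b
  | Sum.inr (Sum.inr _), Sum.inr (Sum.inr _) => True
  | _, _ => False

/-- The graph `Π(G)`. -/
def PiGraph {A B : Type} (E : A → B → Prop) : SimpleGraph (PiV A B E) :=
  SimpleGraph.fromRel (PiRel E)

/-!
The model lives on a star: a centre `c` with an arc `α_a → c` for every `a ∈ A` and an arc
`c → β_b` for every `b ∈ B`. Take the one-node paths `α_a` for `a` and `β_b` for `b`, and the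
path `α_a → c → β_b` for `x_{ab}`. All edge-vertices meet at `c`, while the path of `x_{ab}` meets
the leaves `α_a` and `β_b` only; side vertices sit on distinct leaves.
-/

namespace SimpleGraph

theorem fromRel_adj_and_lt {V α : Type*} [LinearOrder α] (G : SimpleGraph V) (f : V → α)
    (hf : ∀ x y, G.Adj x y → f x ≠ f y) : fromRel (fun x y => G.Adj x y ∧ f x < f y) = G := by
  ext x y
  simp only [fromRel_adj]
  constructor
  · rintro ⟨-, ⟨h, -⟩ | ⟨h, -⟩⟩
    exacts [h, h.symm]
  · intro h
    refine ⟨h.ne, ?_⟩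
    rcases (hf x y h).lt_or_gt with hlt | hgt
    exacts [.inl ⟨h, hlt⟩, .inr ⟨h.symm, hgt⟩]

end SimpleGraph

namespace PiGraph

open SimpleGraph

variable {A B : Type} {E : A → B → Prop}

/-- `some (inl a)` is the leaf `α_a`, `none` the centre, `some (inr b)` the leaf `β_b`. -/
def level : Option (A ⊕ B) → ℕ
  | some (Sum.inl _) => 0
  | none => 1
  | some (Sum.inr _) => 2

def starArc (x y : Option (A ⊕ B)) : Prop :=
  (starGraph none).Adj x y ∧ level x < level y

theorem starArc_irrefl (x : Option (A ⊕ B)) : ¬ starArc x x :=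
  fun h => h.1.ne rfl

theorem starArc_asymm (x y : Option (A ⊕ B)) (h : starArc x y) : ¬ starArc y x :=
  fun h' => h.2.not_gt h'.2

theorem isTree_fromRel_starArc : (fromRel (starArc (A := A) (B := B))).IsTree := by
  unfold starArc
  rw [fromRel_adj_and_lt]
  · exact isTree_starGraph none
  · rintro (_ | _ | _) (_ | _ | _) <;> simp [level]

def pathLen : PiV A B E → ℕ
  | Sum.inr (Sum.inr _) => 2
  | _ => 0

def path : (v : PiV A B E) → Fin (pathLen v + 1) → Option (A ⊕ B)
  | Sum.inl a, _ => some (Sum.inl a)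
  | Sum.inr (Sum.inl b), _ => some (Sum.inr b)
  | Sum.inr (Sum.inr e), i => ![some (Sum.inl e.1.1), none, some (Sum.inr e.1.2)] i

theorem path_injective (v : PiV A B E) : Function.Injective (path v) := by
  rcases v with a | b | e
  · exact fun i j _ => Subsingleton.elim (α := Fin 1) i j
  · exact fun i j _ => Subsingleton.elim (α := Fin 1) i j
  · intro i j h
    fin_cases i <;> fin_cases j <;> simp_all [path, pathLen]

theorem starArc_path (v : PiV A B E) (i : Fin (pathLen v)) :
    starArc (path v i.castSucc) (path v i.succ) := by
  rcases v with a | b | e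
  · exact i.elim0
  · exact i.elim0
  · fin_cases i
    · show starArc (some (Sum.inl e.1.1)) none
      exact ⟨by simp, Nat.zero_lt_one⟩
    · show starArc none (some (Sum.inr e.1.2))
      exact ⟨by simp, Nat.one_lt_two⟩

theorem adj_iff_exists_path (u v : PiV A B E) (huv : u ≠ v) :
    ((PiGraph E).Adj u v ↔ ∃ z, (∃ i, path u i = z) ∧ (∃ j, path v j = z)) := by
  rcases u with a | b | e <;> rcases v with a' | b' | e' <;>
    simp_all [PiGraph, PiRel, path, pathLen, Fin.exists_fin_succ, Subtype.ext_iff,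
      Prod.ext_iff, eq_comm]

end PiGraph

/-- for every finite bipartite graph `G`, the graph `Π(G)` is a directed path
graph. -/
theorem stmt7 (A B : Type) [Fintype A] [Fintype B] (E : A → B → Prop) :
    Nonempty (DPModel (PiV A B E) (PiGraph E)) :=
  ⟨{ N := Option (A ⊕ B)
     fintypeN := inferInstance
     arc := PiGraph.starArc
     arc_irrefl := PiGraph.starArc_irrefl
     arc_asymm := PiGraph.starArc_asymm
     isTree := PiGraph.isTree_fromRel_starArc
     len := PiGraph.pathLen
     path := PiGraph.path
     path_inj := PiGraph.path_injective
     path_arc := PiGraph.starArc_path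
     adj_iff := PiGraph.adj_iff_exists_path }⟩
end

section
/- Let p_1, …, p_n be a 1.5D terrain and let a ≺ b ≺ c ≺ d be four of its vertices in left-right order. If a and c see each other, and b and d see each other, then a and d see each other. -/
/-!
For `i < j`, `p_i` sees `p_j` exactly when every vertex in between lies on or below the line
`p_i p_j`. Since `b` lies below `ac` and `c` below `bd`, the point `c` lies below `ad`, and
hence so does `b`. A vertex `k ≤ c` lies below `ac`, which on `[a, c]` runs below `ad`
because `c` does; a vertex `k > c` lies below `bd`, which on `[b, d]` runs below `ad` because
`b` does.
-/

/-- A 1.5D terrain: points `p_1, …, p_n` in the plane with strictly increasing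
`x`-coordinates. -/
structure Terrain (n : ℕ) where
  pt : Fin n → ℝ × ℝ
  xmono : StrictMono fun i : Fin n => (pt i).1

/-- Vertices `i` and `j` of a terrain see each other: they are distinct and every terrain
vertex between them lies on or below the closed segment joining them. -/
def Terrain.Sees {n : ℕ} (T : Terrain n) (i j : Fin n) : Prop :=
  i ≠ j ∧ ∀ k : Fin n, min i j ≤ k → k ≤ max i j →
    ∃ z ∈ segment ℝ (T.pt (min i j)) (T.pt (max i j)),
      z.1 = (T.pt k).1 ∧ (T.pt k).2 ≤ z.2

/-- The visibility graph of a terrain. -/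
def Terrain.visibilityGraph {n : ℕ} (T : Terrain n) : SimpleGraph (Fin n) where
  Adj i j := T.Sees i j
  symm := by
    constructor
    intro i j h
    refine ⟨h.1.symm, ?_⟩
    rw [min_comm j i, max_comm j i]
    exact h.2
  loopless := ⟨fun i h => h.1 rfl⟩

/-- For `p.1 < q.1`: `r` lies on or below the line through `p` and `q`, denominators cleared. -/
def BelowLine (p q r : ℝ × ℝ) : Prop :=
  (q.1 - p.1) * r.2 ≤ (q.1 - r.1) * p.2 + (r.1 - p.1) * q.2

theorem exists_mem_segment_fst_eq_le_iff {p q r : ℝ × ℝ} (hpq : p.1 < q.1) (hpr : p.1 ≤ r.1)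
    (hrq : r.1 ≤ q.1) :
    (∃ z ∈ segment ℝ p q, z.1 = r.1 ∧ r.2 ≤ z.2) ↔ BelowLine p q r := by
  have hd : 0 < q.1 - p.1 := sub_pos.2 hpq
  simp only [segment_eq_image', Set.mem_image, Set.mem_Icc]
  constructor
  · rintro ⟨_, ⟨θ, -, rfl⟩, hx, hy⟩
    simp only [Prod.fst_add, Prod.snd_add, Prod.smul_fst, Prod.smul_snd, Prod.fst_sub,
      Prod.snd_sub, smul_eq_mul] at hx hy
    unfold BelowLine
    linear_combination mul_le_mul_of_nonneg_left hy hd.le + (q.2 - p.2) * hx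
  · intro h
    unfold BelowLine at h
    obtain ⟨θ, hθ0, hθ1, hθ⟩ : ∃ θ : ℝ, 0 ≤ θ ∧ θ ≤ 1 ∧ θ * (q.1 - p.1) = r.1 - p.1 :=
      ⟨(r.1 - p.1) / (q.1 - p.1), div_nonneg (sub_nonneg.2 hpr) hd.le,
        div_le_one_of_le₀ (sub_le_sub_right hrq _) hd.le, div_mul_cancel₀ _ hd.ne'⟩
    refine ⟨_, ⟨θ, ⟨hθ0, hθ1⟩, rfl⟩, ?_, ?_⟩
    · simp only [Prod.fst_add, Prod.smul_fst, Prod.fst_sub, smul_eq_mul]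
      linarith
    · simp only [Prod.snd_add, Prod.smul_snd, Prod.snd_sub, smul_eq_mul]
      refine le_of_mul_le_mul_left ?_ hd
      linear_combination h - (q.2 - p.2) * hθ

theorem Terrain.sees_iff_forall_belowLine {n : ℕ} (T : Terrain n) {i j : Fin n} (hij : i < j) :
    T.Sees i j ↔ ∀ k, i ≤ k → k ≤ j → BelowLine (T.pt i) (T.pt j) (T.pt k) := by
  simp only [Terrain.Sees, min_eq_left hij.le, max_eq_right hij.le, ne_eq, hij.ne,
    not_false_eq_true, true_and]
  refine forall_congr' fun k => forall₂_congr fun hik hkj => ?_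
  exact exists_mem_segment_fst_eq_le_iff (T.xmono hij) (T.xmono.monotone hik)
    (T.xmono.monotone hkj)

namespace BelowLine

variable {a b c d : ℝ × ℝ}

theorem trans_left (hb : BelowLine a c b) (hc : BelowLine a d c) (hac : a.1 < c.1)
    (hcd : c.1 ≤ d.1) (hab : a.1 ≤ b.1) : BelowLine a d b := by
  refine le_of_mul_le_mul_left ?_ (sub_pos.2 hac)
  linear_combination mul_le_mul_of_nonneg_left hb (by linarith : (0 : ℝ) ≤ d.1 - a.1) +
    mul_le_mul_of_nonneg_left hc (sub_nonneg.2 hab)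

theorem trans_right (hc : BelowLine b d c) (hb : BelowLine a d b) (hbd : b.1 < d.1)
    (hab : a.1 ≤ b.1) (hcd : c.1 ≤ d.1) : BelowLine a d c := by
  refine le_of_mul_le_mul_left ?_ (sub_pos.2 hbd)
  linear_combination mul_le_mul_of_nonneg_left hc (by linarith : (0 : ℝ) ≤ d.1 - a.1) +
    mul_le_mul_of_nonneg_left hb (sub_nonneg.2 hcd)

theorem of_interleaved (hb : BelowLine a c b) (hc : BelowLine b d c) (hab : a.1 ≤ b.1)
    (hbc : b.1 < c.1) (hcd : c.1 ≤ d.1) : BelowLine a d c := by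
  refine le_of_mul_le_mul_left ?_ (sub_pos.2 hbc)
  linear_combination mul_le_mul_of_nonneg_left hb (sub_nonneg.2 hcd) +
    mul_le_mul_of_nonneg_left hc (by linarith : (0 : ℝ) ≤ c.1 - a.1)

end BelowLine

/-- Order Claim: if `a ≺ b ≺ c ≺ d` are vertices of a 1.5D terrain, `a`
sees `c`, and `b` sees `d`, then `a` sees `d`. -/
theorem stmt13 (n : ℕ) (T : Terrain n) (a b c d : Fin n)
    (hab : a < b) (hbc : b < c) (hcd : c < d)
    (hac : T.Sees a c) (hbd : T.Sees b d) : T.Sees a d := by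
  have hx := T.xmono
  rw [T.sees_iff_forall_belowLine (hab.trans hbc)] at hac
  rw [T.sees_iff_forall_belowLine (hbc.trans hcd)] at hbd
  rw [T.sees_iff_forall_belowLine ((hab.trans hbc).trans hcd)]
  have hC : BelowLine (T.pt a) (T.pt d) (T.pt c) :=
    (hac b hab.le hbc.le).of_interleaved (hbd c hbc.le hcd.le) (hx hab).le (hx hbc) (hx hcd).le
  have hB : BelowLine (T.pt a) (T.pt d) (T.pt b) :=
    (hac b hab.le hbc.le).trans_left hC (hx (hab.trans hbc)) (hx hcd).le (hx hab).le
  intro k hak hkd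
  rcases le_or_gt k c with hkc | hck
  · exact (hac k hak hkc).trans_left hC (hx (hab.trans hbc)) (hx hcd).le (hx.monotone hak)
  · exact (hbd k (hbc.trans hck).le hkd).trans_right hB (hx (hbc.trans hcd)) (hx hab).le
      (hx.monotone hkd)
end
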